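/- arXiv:1405.3102 — 7 statements merged into one kernel-verified Lean document; each statement's English description precedes it below -/
import Mathlib

section
/- Suppose τ ∈ S_n satisfies condition (C), and consider the action of the subgroup ⟨ρ,τ⟩ on {1,...,n}. Then every orbit of this action has cardinality 6, except that: there are exactly one or two orbits of cardinality 2 (one of which is {n−1,n}); if n is odd there is exactly one orbit of cardinality 1 or 3; and if n is even there are no orbits of cardinality 1 or 3. -/
/-- The `(n-1)`-cycle `σ = (1,2,...,n-1)` of `S_n`, viewed as a permutation of `ℕ`
fixing `0` and every `k ≥ n`: `σ(k) = k+1` for `1 ≤ k ≤ n-2`, `σ(n-1) = 1`. -/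
def sigmaFun (n k : ℕ) : ℕ :=
  if 1 ≤ k ∧ k ≤ n - 2 then k + 1 else if k = n - 1 then 1 else k

/-- The involution `ρ ∈ S_n` with `ρ(n-1) = n`, `ρ(n) = n-1` and `ρ(k) = n-1-k` for
`1 ≤ k ≤ n-2`, viewed as a permutation of `ℕ` fixing `0` and every `k > n`. -/
def rhoFun (n k : ℕ) : ℕ :=
  if 1 ≤ k ∧ k ≤ n - 2 then n - 1 - k
  else if k = n - 1 then n else if k = n then n - 1 else k

/-- Condition (C): `τ ∈ S_n` (i.e. `τ` fixes `0` and every `k > n`) has order `2`,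
`τ(n) = n-1`, and for every `k ∈ {1,...,n-2}`,
`τ σ^k τ = σ^(τ(k)) τ σ^(τ(ρ(τ(k))))`. -/
def ConditionC (n : ℕ) (σ ρ τ : Equiv.Perm ℕ) : Prop :=
  orderOf τ = 2 ∧ τ n = n - 1 ∧ (∀ k : ℕ, k = 0 ∨ n < k → τ k = k) ∧
  ∀ k : ℕ, 1 ≤ k → k ≤ n - 2 →
    τ * σ ^ k * τ = σ ^ (τ k) * τ * σ ^ (τ (ρ (τ k)))

/-- The orbit of `k` under a subgroup `H` of permutations: `{h(k) : h ∈ H}`. -/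
def orbitOf {α : Type*} (H : Subgroup (Equiv.Perm α)) (k : α) : Set α :=
  {m : α | ∃ g ∈ H, g k = m}

namespace CondAux

structure Setup (n : ℕ) (σ ρ τ : Equiv.Perm ℕ) : Prop where
  hn : 2 ≤ n
  hσ : ∀ k, σ k = sigmaFun n k
  hρ : ∀ k, ρ k = rhoFun n k
  hC : ConditionC n σ ρ τ

variable {n : ℕ} {σ ρ τ : Equiv.Perm ℕ}

theorem tau_tau (S : Setup n σ ρ τ) : ∀ x, τ (τ x) = x := by
  intro x
  have h : τ * τ = 1 := by
    have := pow_orderOf_eq_one τ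
    rwa [S.hC.1, pow_two] at this
  calc τ (τ x) = (τ * τ) x := rfl
  _ = x := by rw [h]; rfl

theorem tau_zero (S : Setup n σ ρ τ) : τ 0 = 0 := S.hC.2.2.1 0 (Or.inl rfl)

theorem tau_gt (S : Setup n σ ρ τ) {x : ℕ} (h : n < x) : τ x = x := S.hC.2.2.1 x (Or.inr h)

theorem tau_n (S : Setup n σ ρ τ) : τ n = n - 1 := S.hC.2.1

theorem tau_nm1 (S : Setup n σ ρ τ) : τ (n-1) = n := by
  have := congrArg τ (tau_n S)
  rw [tau_tau S] at this
  exact this.symm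

theorem tau_mem (S : Setup n σ ρ τ) {x : ℕ} (h1 : 1 ≤ x) (h2 : x ≤ n - 2) :
    1 ≤ τ x ∧ τ x ≤ n - 2 := by
  have hn := S.hn
  have h0 : τ x ≠ 0 := by
    intro h
    have : τ x = τ 0 := by rw [h, tau_zero S]
    have := τ.injective this
    omega
  have hle : τ x ≤ n := by
    by_contra h
    push_neg at h
    have h2' := tau_gt S h
    have : τ (τ x) = τ x := by rw [h2']
    rw [tau_tau S] at this
    omega
  have hne1 : τ x ≠ n := by
    intro h
    have : τ (τ x) = τ n := by rw [h]
    rw [tau_tau S, tau_n S] at this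
    omega
  have hne2 : τ x ≠ n - 1 := by
    intro h
    have : τ (τ x) = τ (n-1) := by rw [h]
    rw [tau_tau S, tau_nm1 S] at this
    omega
  omega

theorem rho_mem (S : Setup n σ ρ τ) {x : ℕ} (h1 : 1 ≤ x) (h2 : x ≤ n - 2) :
    ρ x = n - 1 - x ∧ 1 ≤ n - 1 - x ∧ n - 1 - x ≤ n - 2 := by
  have hn := S.hn
  refine ⟨?_, by omega, by omega⟩
  rw [S.hρ, rhoFun, if_pos ⟨h1, h2⟩]

theorem rho_nm1 (S : Setup n σ ρ τ) : ρ (n-1) = n := by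
  have hn := S.hn
  rw [S.hρ, rhoFun, if_neg (by omega), if_pos rfl]

theorem rho_n (S : Setup n σ ρ τ) : ρ n = n - 1 := by
  have hn := S.hn
  rw [S.hρ, rhoFun, if_neg (by omega), if_neg (by omega), if_pos rfl]

theorem rho_rho (S : Setup n σ ρ τ) : ∀ x, ρ (ρ x) = x := by
  have hn := S.hn
  intro x
  rcases Nat.lt_or_ge x 1 with h | h
  · have hx : x = 0 := by omega
    subst hx
    have h0 : ρ 0 = 0 := by
      rw [S.hρ, rhoFun, if_neg (by omega), if_neg (by omega), if_neg (by omega)]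
    rw [h0, h0]
  rcases Nat.lt_or_ge (n-2) x with h' | h'
  · rcases Nat.lt_or_ge n x with h'' | h''
    · have h0 : ρ x = x := by
        rw [S.hρ, rhoFun, if_neg (by omega), if_neg (by omega), if_neg (by omega)]
      rw [h0, h0]
    · rcases (by omega : x = n - 1 ∨ x = n) with rfl | rfl
      · rw [rho_nm1 S, rho_n S]
      · rw [rho_n S, rho_nm1 S]
  · obtain ⟨e, m1, m2⟩ := rho_mem S h h'
    rw [e, (rho_mem S m1 m2).1]
    omega

theorem sigma_apply (S : Setup n σ ρ τ) {x : ℕ} (h1 : 1 ≤ x) (h2 : x ≤ n - 1) :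
    σ x = if x ≤ n - 2 then x + 1 else 1 := by
  have hn := S.hn
  rw [S.hσ, sigmaFun]
  by_cases h : x ≤ n - 2
  · rw [if_pos ⟨h1, h⟩, if_pos h]
  · rw [if_neg (by omega), if_pos (by omega), if_neg h]

theorem sigma_fix (S : Setup n σ ρ τ) {x : ℕ} (h : x = 0 ∨ n ≤ x) : σ x = x := by
  have hn := S.hn
  rw [S.hσ, sigmaFun, if_neg (by omega), if_neg (by omega)]

theorem sigma_pow_fix (S : Setup n σ ρ τ) {x : ℕ} (h : x = 0 ∨ n ≤ x) :
    ∀ j, (σ ^ j) x = x := by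
  intro j
  induction j with
  | zero => rfl
  | succ j ih =>
    rw [pow_succ, Equiv.Perm.mul_apply, sigma_fix S h, ih]

theorem sigma_pow (S : Setup n σ ρ τ) (j : ℕ) {x : ℕ} (h1 : 1 ≤ x) (h2 : x ≤ n - 1) :
    (σ ^ j) x = (x - 1 + j) % (n - 1) + 1 := by
  have hn := S.hn
  induction j with
  | zero =>
    rw [pow_zero]
    simp only [Equiv.Perm.coe_one, id_eq]
    rw [Nat.mod_eq_of_lt (by omega)]
    omega
  | succ j ih =>
    rw [pow_succ', Equiv.Perm.mul_apply, ih]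
    set r := (x - 1 + j) % (n - 1) with hr
    have hrlt : r < n - 1 := Nat.mod_lt _ (by omega)
    have hmod : (x - 1 + (j+1)) % (n-1) = (r + 1) % (n-1) := by
      have : x - 1 + (j+1) = (x - 1 + j) + 1 := by omega
      rw [this, Nat.add_mod (x-1+j) 1, ← hr, Nat.add_mod r 1, Nat.mod_eq_of_lt hrlt]
    rw [hmod, sigma_apply S (by omega) (by omega)]
    by_cases hc : r + 1 ≤ n - 2
    · rw [if_pos hc, Nat.mod_eq_of_lt (by omega)]
    · rw [if_neg hc]
      have : r + 1 = n - 1 := by omega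
      rw [this, Nat.mod_self]

/-- τ transported to `ZMod (n-1)` (0 ↦ 0). -/
def Tm (n : ℕ) (τ : Equiv.Perm ℕ) (v : ZMod (n-1)) : ZMod (n-1) :=
  if v = 0 then 0 else ((τ v.val : ℕ) : ZMod (n-1))

theorem neZero (S : Setup n σ ρ τ) : NeZero (n-1) := ⟨by have := S.hn; omega⟩

theorem cast_mem (S : Setup n σ ρ τ) {x : ℕ} (h1 : 1 ≤ x) (h2 : x ≤ n - 2) :
    ((x : ZMod (n-1))).val = x ∧ (x : ZMod (n-1)) ≠ 0 := by
  have hn := S.hn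
  haveI := neZero S
  have hv : ((x : ZMod (n-1))).val = x := ZMod.val_cast_of_lt (by omega)
  refine ⟨hv, fun h => ?_⟩
  rw [h, ZMod.val_zero] at hv
  omega

theorem val_mem (S : Setup n σ ρ τ) {v : ZMod (n-1)} (hv : v ≠ 0) :
    1 ≤ v.val ∧ v.val ≤ n - 2 := by
  have hn := S.hn
  haveI := neZero S
  have h1 : v.val < n - 1 := ZMod.val_lt v
  have h2 : v.val ≠ 0 := fun h => hv ((ZMod.val_eq_zero v).1 h)
  omega

theorem mem_unique (S : Setup n σ ρ τ) {y z : ℕ} (hy1 : 1 ≤ y) (hy2 : y ≤ n - 1)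
    (hz1 : 1 ≤ z) (hz2 : z ≤ n - 1) (h : (y : ZMod (n-1)) = (z : ZMod (n-1))) : y = z := by
  have hn := S.hn
  haveI := neZero S
  rcases (by omega : y = n - 1 ∨ y ≤ n - 2) with rfl | hy
  · rcases (by omega : z = n - 1 ∨ z ≤ n - 2) with rfl | hz
    · rfl
    · rw [ZMod.natCast_self] at h
      have := (cast_mem S hz1 hz).2
      exact absurd h.symm this
  · rcases (by omega : z = n - 1 ∨ z ≤ n - 2) with rfl | hz
    · rw [ZMod.natCast_self] at h
      exact absurd h (cast_mem S hy1 hy).2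
    · have := (cast_mem S hy1 hy).1
      rw [h, (cast_mem S hz1 hz).1] at this
      omega

theorem cast_eq_zero_iff (S : Setup n σ ρ τ) {y : ℕ} (hy1 : 1 ≤ y) (hy2 : y ≤ n - 1) :
    (y : ZMod (n-1)) = 0 ↔ y = n - 1 := by
  have hn := S.hn
  constructor
  · intro h
    rcases (by omega : y = n - 1 ∨ y ≤ n - 2) with rfl | hy
    · rfl
    · exact absurd h (cast_mem S hy1 hy).2
  · rintro rfl
    exact ZMod.natCast_self _

theorem Tm_zero (S : Setup n σ ρ τ) : Tm n τ 0 = 0 := if_pos rfl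

theorem Tm_cast (S : Setup n σ ρ τ) {x : ℕ} (h1 : 1 ≤ x) (h2 : x ≤ n - 2) :
    ((τ x : ℕ) : ZMod (n-1)) = Tm n τ (x : ZMod (n-1)) := by
  rw [Tm, if_neg (cast_mem S h1 h2).2, (cast_mem S h1 h2).1]

theorem Tm_spec (S : Setup n σ ρ τ) {v : ZMod (n-1)} (hv : v ≠ 0) :
    (Tm n τ v).val = τ v.val ∧ Tm n τ v ≠ 0 := by
  obtain ⟨h1, h2⟩ := val_mem S hv
  obtain ⟨ht1, ht2⟩ := tau_mem S h1 h2
  rw [Tm, if_neg hv]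
  exact ⟨(cast_mem S ht1 ht2).1, (cast_mem S ht1 ht2).2⟩

theorem Tm_ne_zero (S : Setup n σ ρ τ) {v : ZMod (n-1)} (hv : v ≠ 0) : Tm n τ v ≠ 0 :=
  (Tm_spec S hv).2

theorem Tm_Tm (S : Setup n σ ρ τ) (v : ZMod (n-1)) : Tm n τ (Tm n τ v) = v := by
  haveI := neZero S
  by_cases hv : v = 0
  · rw [hv, Tm_zero S, Tm_zero S]
  · have h1 := Tm_spec S hv
    have h2 := Tm_spec S (Tm_ne_zero S hv)
    rw [Tm, if_neg h1.2, h1.1, tau_tau S, ZMod.natCast_zmod_val]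

theorem Tm_inj (S : Setup n σ ρ τ) {v w : ZMod (n-1)} (h : Tm n τ v = Tm n τ w) : v = w := by
  have := congrArg (Tm n τ) h
  rwa [Tm_Tm S, Tm_Tm S] at this

theorem cast_cycle (S : Setup n σ ρ τ) (a b : ℕ) (ha : 1 ≤ a) :
    (((a - 1 + b) % (n-1) + 1 : ℕ) : ZMod (n-1)) = (a : ZMod (n-1)) + (b : ZMod (n-1)) := by
  have hn := S.hn
  have h2 : (((a - 1 + b) % (n-1) : ℕ) : ZMod (n-1)) = ((a - 1 + b : ℕ) : ZMod (n-1)) := by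
    conv_rhs => rw [← Nat.mod_add_div (a-1+b) (n-1)]
    push_cast
    rw [ZMod.natCast_self]
    ring
  have h1 : a - 1 + b + 1 = a + b := by omega
  calc (((a - 1 + b) % (n-1) + 1 : ℕ) : ZMod (n-1))
      = (((a - 1 + b) % (n-1) : ℕ) : ZMod (n-1)) + 1 := by push_cast; ring
    _ = ((a - 1 + b : ℕ) : ZMod (n-1)) + 1 := by rw [h2]
    _ = ((a - 1 + b + 1 : ℕ) : ZMod (n-1)) := by push_cast; ring
    _ = ((a + b : ℕ) : ZMod (n-1)) := by rw [h1]
    _ = (a : ZMod (n-1)) + (b : ZMod (n-1)) := by push_cast; ring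

theorem master (S : Setup n σ ρ τ) {k x : ℕ} (hk1 : 1 ≤ k) (hk2 : k ≤ n-2)
    (hx1 : 1 ≤ x) (hx2 : x ≤ n-2) :
    (Tm n τ (x : ZMod (n-1)) + (k : ZMod (n-1)) = 0 ↔
      (x : ZMod (n-1)) + Tm n τ (-(Tm n τ (k : ZMod (n-1)))) = 0) ∧
    (Tm n τ (x : ZMod (n-1)) + (k : ZMod (n-1)) ≠ 0 →
      Tm n τ (Tm n τ (x : ZMod (n-1)) + (k : ZMod (n-1))) =
        Tm n τ ((x : ZMod (n-1)) + Tm n τ (-(Tm n τ (k : ZMod (n-1))))) +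
          Tm n τ (k : ZMod (n-1))) := by
  have hn := S.hn
  obtain ⟨hτk1, hτk2⟩ := tau_mem S hk1 hk2
  obtain ⟨hρτk, hm1, hm2⟩ := rho_mem S hτk1 hτk2
  obtain ⟨hmm1, hmm2⟩ := tau_mem S hm1 hm2
  have hcastm : ((τ (n - 1 - τ k) : ℕ) : ZMod (n-1)) = Tm n τ (-(Tm n τ (k:ZMod (n-1)))) := by
    have hc1 : ((n - 1 - τ k : ℕ) : ZMod (n-1)) = -(Tm n τ (k : ZMod (n-1))) := by
      rw [Nat.cast_sub (by omega : τ k ≤ n - 1), ← Tm_cast S hk1 hk2]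
      have : ((n - 1 : ℕ) : ZMod (n-1)) = 0 := ZMod.natCast_self _
      rw [this]; ring
    rw [Tm_cast S hm1 hm2, hc1]
  have hE := S.hC.2.2.2 k hk1 hk2
  rw [hρτk] at hE
  have hEx := congrArg (fun g : Equiv.Perm ℕ => g x) hE
  simp only [Equiv.Perm.mul_apply] at hEx
  obtain ⟨hX1, hX2⟩ := tau_mem S hx1 hx2
  rw [sigma_pow S k hX1 (by omega)] at hEx
  rw [sigma_pow S (τ (n - 1 - τ k)) hx1 (by omega)] at hEx
  set m := τ (n - 1 - τ k) with hm
  set y := (τ x - 1 + k) % (n - 1) + 1 with hy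
  set z := (x - 1 + m) % (n - 1) + 1 with hz
  have hy1 : 1 ≤ y := by omega
  have hy2 : y ≤ n - 1 := by
    have := Nat.mod_lt (τ x - 1 + k) (show 0 < n-1 by omega)
    omega
  have hz1 : 1 ≤ z := by omega
  have hz2 : z ≤ n - 1 := by
    have := Nat.mod_lt (x - 1 + m) (show 0 < n-1 by omega)
    omega
  have hycast : ((y : ℕ) : ZMod (n-1)) = Tm n τ (x : ZMod (n-1)) + (k : ZMod (n-1)) := by
    rw [hy, cast_cycle S (τ x) k hX1, Tm_cast S hx1 hx2]
  have hzcast : ((z : ℕ) : ZMod (n-1)) =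
      (x : ZMod (n-1)) + Tm n τ (-(Tm n τ (k : ZMod (n-1)))) := by
    rw [hz, cast_cycle S x m hx1, hm, hcastm]
  have hiff : y = n - 1 ↔ z = n - 1 := by
    constructor
    · intro hyn
      rw [hyn, tau_nm1 S] at hEx
      by_contra hzn
      have hzle : z ≤ n - 2 := by omega
      obtain ⟨hz1', hz2'⟩ := tau_mem S hz1 hzle
      rw [sigma_pow S (τ k) hz1' (by omega)] at hEx
      have := Nat.mod_lt (τ z - 1 + τ k) (show 0 < n-1 by omega)
      omega
    · intro hzn
      rw [hzn, tau_nm1 S] at hEx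
      rw [sigma_pow_fix S (Or.inr (le_refl n)) (τ k)] at hEx
      have := congrArg τ hEx
      rw [tau_tau S, tau_n S] at this
      omega
  constructor
  · rw [← cast_eq_zero_iff S hy1 hy2, ← cast_eq_zero_iff S hz1 hz2, hycast, hzcast] at hiff
    exact hiff
  · intro h0
    have hyne : y ≠ n - 1 := by
      intro h
      apply h0
      rw [← hycast, h]
      exact ZMod.natCast_self _
    have hzne : z ≠ n - 1 := fun h => hyne (hiff.2 h)
    have hyle : y ≤ n - 2 := by omega
    have hzle : z ≤ n - 2 := by omega
    obtain ⟨hz1', hz2'⟩ := tau_mem S hz1 hzle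
    rw [sigma_pow S (τ k) hz1' (by omega)] at hEx
    have hc := congrArg (fun t : ℕ => (t : ZMod (n-1))) hEx
    rw [Tm_cast S hy1 hyle, hycast] at hc
    rw [cast_cycle S (τ z) (τ k) hz1', Tm_cast S hz1 hzle, hzcast,
      Tm_cast S hk1 hk2] at hc
    exact hc

theorem Emain (S : Setup n σ ρ τ) {a b : ZMod (n-1)} (ha : a ≠ 0) (hb : b ≠ 0) :
    (Tm n τ a + b = 0 ↔ a + Tm n τ (-(Tm n τ b)) = 0) ∧
    (Tm n τ a + b ≠ 0 →
      Tm n τ (Tm n τ a + b) = Tm n τ (a + Tm n τ (-(Tm n τ b))) + Tm n τ b) := by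
  haveI := neZero S
  obtain ⟨ha1, ha2⟩ := val_mem S ha
  obtain ⟨hb1, hb2⟩ := val_mem S hb
  have := master S hb1 hb2 ha1 ha2
  rwa [ZMod.natCast_zmod_val, ZMod.natCast_zmod_val] at this

/-- `TCT = CTC`. -/
theorem G1 (S : Setup n σ ρ τ) {b : ZMod (n-1)} (hb : b ≠ 0) :
    Tm n τ (-(Tm n τ b)) = -(Tm n τ (-b)) := by
  have hnb : (-b : ZMod (n-1)) ≠ 0 := neg_ne_zero.2 hb
  have ha : Tm n τ (-b) ≠ 0 := Tm_ne_zero S hnb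
  have h := (Emain S ha hb).1
  rw [Tm_Tm S] at h
  have h0 : (-b : ZMod (n-1)) + b = 0 := by ring
  have := h.1 h0
  linear_combination this

/-- The master functional equation in its symmetric form. -/
theorem Emain' (S : Setup n σ ρ τ) {u k : ZMod (n-1)} (hu : u ≠ 0) (hk : k ≠ 0)
    (huk : u + k ≠ 0) :
    Tm n τ (u + k) = Tm n τ (Tm n τ u - Tm n τ (-k)) + Tm n τ k := by
  have ha : Tm n τ u ≠ 0 := Tm_ne_zero S hu
  have h := (Emain S ha hk).2
  rw [Tm_Tm S, G1 S hk] at h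
  have h2 := h huk
  rw [sub_eq_add_neg]
  exact h2

/-- No pair `x, -x` of distinct fixed points of `T`. -/
theorem no_fix_pair (S : Setup n σ ρ τ) {u : ZMod (n-1)} (hu : u ≠ 0)
    (h1 : Tm n τ u = u) (h2 : Tm n τ (-u) = -u) (hne : u ≠ -u) : False := by
  have huu : u + u ≠ 0 := fun h => hne (eq_neg_of_add_eq_zero_left h)
  have := Emain' S hu hu huu
  rw [h1, h2, sub_neg_eq_add] at this
  exact hu (by linear_combination -this)

/-- Rigidity of `r`-fixed points. -/
theorem F_rigid (S : Setup n σ ρ τ) {u v : ZMod (n-1)} (hu : u ≠ 0) (hv : v ≠ 0)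
    (h1 : Tm n τ u = -u) (h2 : Tm n τ v = -v) (huv : u + v ≠ 0) : u = v := by
  have h1' : Tm n τ (-u) = u := by rw [← h1, Tm_Tm S]
  have h2' : Tm n τ (-v) = v := by rw [← h2, Tm_Tm S]
  have e1 := Emain' S hu hv huv
  have e2 := Emain' S hv hu (by rwa [add_comm] at huv)
  rw [h1, h2', h2, (by ring : -u - v = -(u + v))] at e1
  rw [h2, h1', h1, (by ring : -v - u = -(u + v)), add_comm v u] at e2
  have hcc := add_left_cancel (e1.symm.trans e2)
  exact neg_inj.1 hcc.symm

/-- A nonzero 2-torsion point has value `(n-1)/2`. -/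
theorem two_torsion_val (S : Setup n σ ρ τ) {u : ZMod (n-1)} (hu : u ≠ 0)
    (h : u = -u) : 2 * u.val = n - 1 := by
  have hn := S.hn
  haveI := neZero S
  have h0 : ((2 * u.val : ℕ) : ZMod (n-1)) = 0 := by
    push_cast
    rw [ZMod.natCast_zmod_val]
    linear_combination h
  have hdvd := (ZMod.natCast_eq_zero_iff _ _).1 h0
  obtain ⟨c, hc⟩ := hdvd
  obtain ⟨hv1, hv2⟩ := val_mem S hu
  rcases Nat.lt_or_ge c 2 with hcl | hcl
  · interval_cases c <;> omega
  · have h2' : (n-1) * 2 ≤ (n-1) * c := Nat.mul_le_mul_left _ hcl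
    rw [← hc] at h2'
    omega

theorem rho_mem_H : ρ ∈ Subgroup.closure ({ρ, τ} : Set (Equiv.Perm ℕ)) :=
  Subgroup.subset_closure (Set.mem_insert _ _)

theorem tau_mem_H : τ ∈ Subgroup.closure ({ρ, τ} : Set (Equiv.Perm ℕ)) :=
  Subgroup.subset_closure (Set.mem_insert_of_mem _ rfl)

/-- the commutation relation `ρτρ = τρτ` (pointwise, everywhere). -/
theorem rel_rho_tau (S : Setup n σ ρ τ) : ∀ x, ρ (τ (ρ x)) = τ (ρ (τ x)) := by
  have hn := S.hn
  intro x
  rcases Nat.lt_or_ge x 1 with h | h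
  · have hx : x = 0 := by omega
    subst hx
    have h0 : ρ 0 = 0 := by
      rw [S.hρ, rhoFun, if_neg (by omega), if_neg (by omega), if_neg (by omega)]
    simp only [h0, tau_zero S]
  rcases Nat.lt_or_ge (n-2) x with h' | h'
  · rcases Nat.lt_or_ge n x with h'' | h''
    · have h0 : ρ x = x := by
        rw [S.hρ, rhoFun, if_neg (by omega), if_neg (by omega), if_neg (by omega)]
      simp only [h0, tau_gt S h'']
    · rcases (by omega : x = n - 1 ∨ x = n) with rfl | rfl
      · simp only [rho_nm1 S, tau_n S, rho_n S, tau_nm1 S]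
      · simp only [rho_n S, tau_nm1 S, rho_nm1 S, tau_n S]
  · -- x ∈ M : use the ZMod identity G1
    obtain ⟨e2, m21, m22⟩ := rho_mem S h h'
    obtain ⟨t1, t2⟩ := tau_mem S m21 m22
    obtain ⟨e4, m41, m42⟩ := rho_mem S t1 t2
    obtain ⟨T1, T2⟩ := tau_mem S h h'
    obtain ⟨e5, m51, m52⟩ := rho_mem S T1 T2
    obtain ⟨u1, u2⟩ := tau_mem S m51 m52
    rw [e2, e4, e5]
    -- goal : n - 1 - τ (n-1-x) = τ (n-1-τ x)
    apply mem_unique S (by omega) (by omega) (by omega) (by omega)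
    have hx' := cast_mem S h h'
    have hcx : ((n - 1 - x : ℕ) : ZMod (n-1)) = -((x:ℕ) : ZMod (n-1)) := by
      rw [Nat.cast_sub (by omega : x ≤ n - 1), ZMod.natCast_self]; ring
    have hctx : ((n - 1 - τ x : ℕ) : ZMod (n-1)) = -(Tm n τ ((x:ℕ) : ZMod (n-1))) := by
      rw [Nat.cast_sub (by omega : τ x ≤ n - 1), ZMod.natCast_self, ← Tm_cast S h h']; ring
    have lhs : ((n - 1 - τ (n-1-x) : ℕ) : ZMod (n-1)) = -(Tm n τ (-((x:ℕ) : ZMod (n-1)))) := by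
      rw [Nat.cast_sub (by omega : τ (n-1-x) ≤ n - 1), ZMod.natCast_self,
        Tm_cast S m21 m22, hcx]
      ring
    have rhs : ((τ (n - 1 - τ x) : ℕ) : ZMod (n-1)) = Tm n τ (-(Tm n τ ((x:ℕ) : ZMod (n-1)))) := by
      rw [Tm_cast S m51 m52, hctx]
    rw [lhs, rhs, G1 S hx'.2]

theorem orbit_explicit (S : Setup n σ ρ τ) (k : ℕ) :
    orbitOf (Subgroup.closure ({ρ, τ} : Set (Equiv.Perm ℕ))) k =
      ({k, τ k, ρ k, τ (ρ k), ρ (τ k), τ (ρ (τ k))} : Set ℕ) := by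
  have hτ2 := tau_tau S
  have hρ2 := rho_rho S
  have hrel := rel_rho_tau S
  set OO : Set ℕ := {k, τ k, ρ k, τ (ρ k), ρ (τ k), τ (ρ (τ k))} with hOO
  have stepτ : ∀ y ∈ OO, τ y ∈ OO := by
    intro y hy
    simp only [hOO, Set.mem_insert_iff, Set.mem_singleton_iff] at hy ⊢
    rcases hy with rfl | rfl | rfl | rfl | rfl | rfl
    · tauto
    · rw [hτ2]; tauto
    · tauto
    · rw [hτ2]; tauto
    · tauto
    · rw [hτ2]; tauto
  have stepρ : ∀ y ∈ OO, ρ y ∈ OO := by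
    intro y hy
    simp only [hOO, Set.mem_insert_iff, Set.mem_singleton_iff] at hy ⊢
    rcases hy with rfl | rfl | rfl | rfl | rfl | rfl
    · tauto
    · tauto
    · rw [hρ2]; tauto
    · rw [hrel]; tauto
    · rw [hρ2]; tauto
    · rw [show ρ (τ (ρ (τ k))) = τ (ρ (τ (τ k))) from hrel (τ k), hτ2]; tauto
  ext m
  constructor
  · rintro ⟨g, hg, rfl⟩
    have key : ∀ x, x ∈ OO ↔ g x ∈ OO := by
      refine Subgroup.closure_induction ?_ ?_ ?_ ?_ hg
      · rintro g' (rfl | rfl)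
        · exact fun x => ⟨fun hx => stepρ x hx, fun hx => by
            have := stepρ _ hx; rwa [hρ2] at this⟩
        · exact fun x => ⟨fun hx => stepτ x hx, fun hx => by
            have := stepτ _ hx; rwa [hτ2] at this⟩
      · intro x; simp
      · intro a b _ _ ha hb x
        rw [Equiv.Perm.mul_apply]
        exact (hb x).trans (ha (b x))
      · intro a _ ha x
        constructor
        · intro hx
          have := (ha (a⁻¹ x)).2
          simp only [Equiv.Perm.coe_inv, Equiv.apply_symm_apply] at this
          exact this hx
        · intro hx
          have := (ha (a⁻¹ x)).1 hx
          simpa using this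
    exact (key k).1 (by simp [hOO])
  · intro hm
    simp only [hOO, Set.mem_insert_iff, Set.mem_singleton_iff] at hm
    rcases hm with rfl | rfl | rfl | rfl | rfl | rfl
    · exact ⟨1, one_mem _, rfl⟩
    · exact ⟨τ, tau_mem_H, rfl⟩
    · exact ⟨ρ, rho_mem_H, rfl⟩
    · exact ⟨τ * ρ, mul_mem tau_mem_H rho_mem_H, rfl⟩
    · exact ⟨ρ * τ, mul_mem rho_mem_H tau_mem_H, rfl⟩
    · exact ⟨τ * ρ * τ, mul_mem (mul_mem tau_mem_H rho_mem_H) tau_mem_H, rfl⟩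

theorem orbit_eq_of_mem {H : Subgroup (Equiv.Perm ℕ)} {k m : ℕ}
    (hm : m ∈ orbitOf H k) : orbitOf H m = orbitOf H k := by
  obtain ⟨g0, hg0, hg0k⟩ := hm
  ext y
  constructor
  · rintro ⟨g, hg, rfl⟩
    exact ⟨g * g0, mul_mem hg hg0, by rw [Equiv.Perm.mul_apply, hg0k]⟩
  · rintro ⟨g, hg, rfl⟩
    refine ⟨g * g0⁻¹, mul_mem hg (inv_mem hg0), ?_⟩
    rw [Equiv.Perm.mul_apply, ← hg0k, Equiv.Perm.coe_inv, Equiv.symm_apply_apply]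

theorem orbit_nm1 (S : Setup n σ ρ τ) :
    orbitOf (Subgroup.closure ({ρ, τ} : Set (Equiv.Perm ℕ))) (n-1) = ({n-1, n} : Set ℕ) := by
  rw [orbit_explicit S, tau_nm1 S, rho_nm1 S, rho_n S, tau_n S, tau_nm1 S]
  ext y
  simp only [Set.mem_insert_iff, Set.mem_singleton_iff]
  tauto

theorem orbit_n (S : Setup n σ ρ τ) :
    orbitOf (Subgroup.closure ({ρ, τ} : Set (Equiv.Perm ℕ))) n = ({n-1, n} : Set ℕ) := by
  have : n ∈ orbitOf (Subgroup.closure ({ρ, τ} : Set (Equiv.Perm ℕ))) (n-1) := by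
    rw [orbit_nm1 S]; right; rfl
  rw [orbit_eq_of_mem this, orbit_nm1 S]

theorem ncard3 {a b c : ℕ} (hab : a ≠ b) (hac : a ≠ c) (hbc : b ≠ c) :
    ({a, b, c} : Set ℕ).ncard = 3 := by
  rw [Set.ncard_insert_of_notMem (by
    simp only [Set.mem_insert_iff, Set.mem_singleton_iff]; push_neg; exact ⟨hab, hac⟩),
    Set.ncard_pair hbc]

theorem ncard6 {a b c d e f : ℕ} (h01 : a ≠ b) (h02 : a ≠ c) (h03 : a ≠ d) (h04 : a ≠ e)
    (h05 : a ≠ f) (h12 : b ≠ c) (h13 : b ≠ d) (h14 : b ≠ e) (h15 : b ≠ f)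
    (h23 : c ≠ d) (h24 : c ≠ e) (h25 : c ≠ f) (h34 : d ≠ e) (h35 : d ≠ f) (h45 : e ≠ f) :
    ({a, b, c, d, e, f} : Set ℕ).ncard = 6 := by
  rw [Set.ncard_insert_of_notMem (by
      simp only [Set.mem_insert_iff, Set.mem_singleton_iff]; push_neg
      exact ⟨h01, h02, h03, h04, h05⟩),
    Set.ncard_insert_of_notMem (by
      simp only [Set.mem_insert_iff, Set.mem_singleton_iff]; push_neg
      exact ⟨h12, h13, h14, h15⟩),
    Set.ncard_insert_of_notMem (by
      simp only [Set.mem_insert_iff, Set.mem_singleton_iff]; push_neg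
      exact ⟨h23, h24, h25⟩),
    Set.ncard_insert_of_notMem (by
      simp only [Set.mem_insert_iff, Set.mem_singleton_iff]; push_neg
      exact ⟨h34, h35⟩),
    Set.ncard_pair h45]

set_option maxHeartbeats 1600000 in
theorem classify (S : Setup n σ ρ τ) {k : ℕ} (hk1 : 1 ≤ k) (hk2 : k ≤ n - 2) :
    ((orbitOf (Subgroup.closure ({ρ, τ} : Set (Equiv.Perm ℕ))) k).ncard = 1 ∨
     (orbitOf (Subgroup.closure ({ρ, τ} : Set (Equiv.Perm ℕ))) k).ncard = 2 ∨
     (orbitOf (Subgroup.closure ({ρ, τ} : Set (Equiv.Perm ℕ))) k).ncard = 3 ∨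
     (orbitOf (Subgroup.closure ({ρ, τ} : Set (Equiv.Perm ℕ))) k).ncard = 6) ∧
    (((orbitOf (Subgroup.closure ({ρ, τ} : Set (Equiv.Perm ℕ))) k).ncard = 1 ∨
      (orbitOf (Subgroup.closure ({ρ, τ} : Set (Equiv.Perm ℕ))) k).ncard = 3) →
      ∃ z, z ∈ orbitOf (Subgroup.closure ({ρ, τ} : Set (Equiv.Perm ℕ))) k ∧
        1 ≤ z ∧ z ≤ n - 2 ∧ 2 * z = n - 1) ∧
    ((orbitOf (Subgroup.closure ({ρ, τ} : Set (Equiv.Perm ℕ))) k).ncard = 2 →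
      Tm n τ (k : ZMod (n-1)) = -(k : ZMod (n-1))) ∧
    ((k : ZMod (n-1)) = -(k : ZMod (n-1)) →
      (orbitOf (Subgroup.closure ({ρ, τ} : Set (Equiv.Perm ℕ))) k).ncard = 1 ∨
      (orbitOf (Subgroup.closure ({ρ, τ} : Set (Equiv.Perm ℕ))) k).ncard = 3) := by
  have hn := S.hn
  haveI := neZero S
  set Ob := orbitOf (Subgroup.closure ({ρ, τ} : Set (Equiv.Perm ℕ))) k with hOb
  have m1 := tau_mem S hk1 hk2
  have m2 : 1 ≤ n - 1 - k ∧ n - 1 - k ≤ n - 2 := ⟨by omega, by omega⟩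
  have m3 := tau_mem S m2.1 m2.2
  have m4 : 1 ≤ n - 1 - τ k ∧ n - 1 - τ k ≤ n - 2 := ⟨by omega, by omega⟩
  have m5 := tau_mem S m4.1 m4.2
  have c0 := cast_mem S hk1 hk2
  have c1 : ((τ k : ℕ) : ZMod (n-1)) = Tm n τ (k : ZMod (n-1)) := Tm_cast S hk1 hk2
  have c2 : ((n - 1 - k : ℕ) : ZMod (n-1)) = -(k : ZMod (n-1)) := by
    rw [Nat.cast_sub (by omega : k ≤ n - 1), ZMod.natCast_self]; ring
  have c3 : ((τ (n - 1 - k) : ℕ) : ZMod (n-1)) = Tm n τ (-(k : ZMod (n-1))) := by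
    rw [Tm_cast S m2.1 m2.2, c2]
  have c4 : ((n - 1 - τ k : ℕ) : ZMod (n-1)) = -(Tm n τ (k : ZMod (n-1))) := by
    rw [Nat.cast_sub (by omega : τ k ≤ n - 1), ZMod.natCast_self, c1]; ring
  have c5 : ((τ (n - 1 - τ k) : ℕ) : ZMod (n-1)) = Tm n τ (-(Tm n τ (k : ZMod (n-1)))) := by
    rw [Tm_cast S m4.1 m4.2, c4]
  have EQ : ∀ a b : ℕ, 1 ≤ a → a ≤ n-2 → 1 ≤ b → b ≤ n-2 →
      ((a:ℕ) : ZMod (n-1)) = ((b:ℕ) : ZMod (n-1)) → a = b := fun a b ha1 ha2 hb1 hb2 h =>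
    mem_unique S ha1 (by omega) hb1 (by omega) h
  have horb : Ob = ({k, τ k, n - 1 - k, τ (n - 1 - k), n - 1 - τ k,
      τ (n - 1 - τ k)} : Set ℕ) := by
    rw [hOb, orbit_explicit S k, (rho_mem S hk1 hk2).1, (rho_mem S m1.1 m1.2).1]
  have hkO : k ∈ Ob := by rw [horb]; left; rfl
  by_cases hcC : (k : ZMod (n-1)) = -(k : ZMod (n-1))
  · -- k is the c-fixed point
    have e2k : n - 1 - k = k := EQ _ _ m2.1 m2.2 hk1 hk2 (by rw [c2, ← hcC])
    have h2k : 2 * k = n - 1 := by omega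
    by_cases htC : Tm n τ (k : ZMod (n-1)) = (k : ZMod (n-1))
    · have e1 : τ k = k := EQ _ _ m1.1 m1.2 hk1 hk2 (by rw [c1, htC])
      rw [e1, e2k, e1] at horb
      have horb1 : Ob = ({k} : Set ℕ) := by
        rw [horb]; ext y
        simp only [Set.mem_insert_iff, Set.mem_singleton_iff]; tauto
      have hcard : Ob.ncard = 1 := by rw [horb1]; exact Set.ncard_singleton k
      exact ⟨Or.inl hcard, fun _ => ⟨k, hkO, hk1, hk2, h2k⟩,
        fun h => by rw [hcard] at h; omega, fun _ => Or.inl hcard⟩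
    · have ne1 : τ k ≠ k := fun h => htC (by rw [← c1, h])
      have e5 : τ (n - 1 - τ k) = n - 1 - τ k := by
        apply EQ _ _ m5.1 m5.2 m4.1 m4.2
        rw [c5, c4, G1 S c0.2, hcC.symm]
      rw [e2k, e5] at horb
      have horb3 : Ob = ({k, τ k, n - 1 - τ k} : Set ℕ) := by
        rw [horb]; ext y
        simp only [Set.mem_insert_iff, Set.mem_singleton_iff]; tauto
      have d2 : k ≠ n - 1 - τ k := by
        intro h
        apply htC
        have hh := congrArg (fun t : ℕ => (t : ZMod (n-1))) h
        rw [c4] at hh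
        have : Tm n τ (k : ZMod (n-1)) = -((k:ℕ) : ZMod (n-1)) := by
          rw [← neg_neg (Tm n τ (k : ZMod (n-1))), ← hh]
        rw [this, ← hcC]
      have d3 : τ k ≠ n - 1 - τ k := by
        intro h
        apply ne1
        have hh := congrArg (fun t : ℕ => (t : ZMod (n-1))) h
        rw [c1, c4] at hh
        have htor := two_torsion_val S (Tm_ne_zero S c0.2) hh
        have hva : (Tm n τ (k : ZMod (n-1))).val = τ k := by
          rw [(Tm_spec S c0.2).1, c0.1]
        rw [hva] at htor
        omega
      have hcard : Ob.ncard = 3 := by rw [horb3]; exact ncard3 ne1.symm d2 d3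
      exact ⟨Or.inr (Or.inr (Or.inl hcard)), fun _ => ⟨k, hkO, hk1, hk2, h2k⟩,
        fun h => by rw [hcard] at h; omega, fun _ => Or.inr hcard⟩
  · -- k is not c-fixed
    have ne2 : n - 1 - k ≠ k := by
      intro h
      apply hcC
      have hh := congrArg (fun t : ℕ => (t : ZMod (n-1))) h
      rw [c2] at hh
      exact hh.symm
    by_cases htC : Tm n τ (k : ZMod (n-1)) = (k : ZMod (n-1))
    · -- τ fixes k : orbit {k, n-1-k, τ(n-1-k)}, size 3
      have e1 : τ k = k := EQ _ _ m1.1 m1.2 hk1 hk2 (by rw [c1, htC])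
      rw [e1] at horb
      have horb3 : Ob = ({k, n - 1 - k, τ (n - 1 - k)} : Set ℕ) := by
        rw [horb]; ext y
        simp only [Set.mem_insert_iff, Set.mem_singleton_iff]; tauto
      have hfix3 : Tm n τ (-(k : ZMod (n-1))) = -(Tm n τ (-(k : ZMod (n-1)))) := by
        conv_rhs => rw [← G1 S c0.2]
        rw [htC]
      have d_a : k ≠ n - 1 - k := ne2.symm
      have d_b : k ≠ τ (n - 1 - k) := by
        intro h
        have hh := congrArg (fun t : ℕ => (t : ZMod (n-1))) h
        rw [c3] at hh
        have h2 := congrArg (Tm n τ) hh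
        rw [Tm_Tm S, htC] at h2
        exact hcC h2
      have d_c : n - 1 - k ≠ τ (n - 1 - k) := by
        intro h
        have hh := congrArg (fun t : ℕ => (t : ZMod (n-1))) h
        rw [c2, c3] at hh
        exact no_fix_pair S c0.2 htC hh.symm hcC
      have horb3 : Ob = ({k, n - 1 - k, τ (n - 1 - k)} : Set ℕ) := by
        rw [horb]; ext y
        simp only [Set.mem_insert_iff, Set.mem_singleton_iff]; tauto
      have hcard : Ob.ncard = 3 := by rw [horb3]; exact ncard3 d_a d_b d_c
      have hv : (Tm n τ (-(k : ZMod (n-1)))).val = τ (n - 1 - k) := by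
        rw [← c3, (cast_mem S m3.1 m3.2).1]
      have htor := two_torsion_val S (Tm_ne_zero S (neg_ne_zero.2 c0.2)) hfix3
      rw [hv] at htor
      exact ⟨Or.inr (Or.inr (Or.inl hcard)),
        fun _ => ⟨τ (n - 1 - k), (by rw [horb3]; right; right; rfl), m3.1, m3.2, htor⟩,
        fun h => by rw [hcard] at h; omega, fun h => absurd h hcC⟩
    · by_cases htcC : Tm n τ (k : ZMod (n-1)) = -(k : ZMod (n-1))
      · -- orbit {k, τ k}, size 2
        have ne1 : τ k ≠ k := fun h => htC (by rw [← c1, h])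
        have e12 : τ k = n - 1 - k := EQ _ _ m1.1 m1.2 m2.1 m2.2 (by rw [c1, c2, htcC])
        have e3 : τ (n - 1 - k) = k := by
          apply EQ _ _ m3.1 m3.2 hk1 hk2
          rw [c3, ← htcC, Tm_Tm S]
        have e4 : n - 1 - τ k = k := by
          apply EQ _ _ m4.1 m4.2 hk1 hk2
          rw [c4, htcC, neg_neg]
        have e5 : τ (n - 1 - τ k) = τ k := congrArg τ e4
        rw [e5, e4, e3, ← e12] at horb
        have horb2 : Ob = ({k, τ k} : Set ℕ) := by
          rw [horb]; ext y
          simp only [Set.mem_insert_iff, Set.mem_singleton_iff]; tauto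
        have hcard : Ob.ncard = 2 := by rw [horb2]; exact Set.ncard_pair ne1.symm
        exact ⟨Or.inr (Or.inl hcard), fun h => by rw [hcard] at h; omega,
          fun _ => htcC, fun h => absurd h hcC⟩
      · by_cases h4C : -(Tm n τ (k : ZMod (n-1))) = Tm n τ (k : ZMod (n-1))
        · -- orbit {k, τ k, n-1-k}, size 3
          have ne1 : τ k ≠ k := fun h => htC (by rw [← c1, h])
          have e41 : n - 1 - τ k = τ k := EQ _ _ m4.1 m4.2 m1.1 m1.2 (by rw [c4, c1, h4C])
          have e5k : τ (n - 1 - τ k) = k := by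
            apply EQ _ _ m5.1 m5.2 hk1 hk2
            rw [c5, ← h4C, neg_neg, Tm_Tm S]
          have e3 : τ (n - 1 - k) = n - 1 - k := by
            apply EQ _ _ m3.1 m3.2 m2.1 m2.2
            rw [c3, c2]
            have hg := G1 S c0.2
            rw [← h4C, neg_neg, Tm_Tm S] at hg
            have := congrArg (fun t => -t) hg
            simp only [neg_neg] at this
            exact this.symm
          rw [e5k, e41, e3] at horb
          have horb3 : Ob = ({k, τ k, n - 1 - k} : Set ℕ) := by
            rw [horb]; ext y
            simp only [Set.mem_insert_iff, Set.mem_singleton_iff]; tauto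
          have d_b : k ≠ τ k := ne1.symm
          have d_c : τ k ≠ n - 1 - k := by
            intro h
            have hh := congrArg (fun t : ℕ => (t : ZMod (n-1))) h
            rw [c1, c2] at hh
            exact htcC hh
          have hcard : Ob.ncard = 3 := by rw [horb3]; exact ncard3 d_b ne2.symm d_c
          have hfix : Tm n τ (k : ZMod (n-1)) = -(Tm n τ (k : ZMod (n-1))) := h4C.symm
          have htor := two_torsion_val S (Tm_ne_zero S c0.2) hfix
          have hv : (Tm n τ (k : ZMod (n-1))).val = τ k := by
            rw [(Tm_spec S c0.2).1, c0.1]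
          rw [hv] at htor
          exact ⟨Or.inr (Or.inr (Or.inl hcard)),
            fun _ => ⟨τ k, (by rw [horb3]; right; left; rfl), m1.1, m1.2, htor⟩,
            fun h => by rw [hcard] at h; omega, fun h => absurd h hcC⟩
        · -- all six distinct, size 6
          have hg : Tm n τ (-(Tm n τ (k : ZMod (n-1)))) = -(Tm n τ (-(k : ZMod (n-1)))) :=
            G1 S c0.2
          have z01 : (k : ZMod (n-1)) ≠ Tm n τ (k : ZMod (n-1)) := fun h => htC h.symm
          have z03 : (k : ZMod (n-1)) ≠ Tm n τ (-(k : ZMod (n-1))) := by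
            intro h
            have h2 := congrArg (Tm n τ) h
            rw [Tm_Tm S] at h2
            exact htcC h2
          have z04 : (k : ZMod (n-1)) ≠ -(Tm n τ (k : ZMod (n-1))) := by
            intro h
            apply htcC
            rw [← neg_neg (Tm n τ (k : ZMod (n-1))), ← h]
          have z05 : (k : ZMod (n-1)) ≠ Tm n τ (-(Tm n τ (k : ZMod (n-1)))) := by
            intro h
            have h2 := congrArg (Tm n τ) h
            rw [Tm_Tm S] at h2
            exact h4C h2.symm
          have z13 : Tm n τ (k : ZMod (n-1)) ≠ Tm n τ (-(k : ZMod (n-1))) :=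
            fun h => hcC (Tm_inj S h)
          have z14 : Tm n τ (k : ZMod (n-1)) ≠ -(Tm n τ (k : ZMod (n-1))) :=
            fun h => h4C h.symm
          have z15 : Tm n τ (k : ZMod (n-1)) ≠ Tm n τ (-(Tm n τ (k : ZMod (n-1)))) :=
            fun h => z04 (Tm_inj S h)
          have z23 : -(k : ZMod (n-1)) ≠ Tm n τ (-(k : ZMod (n-1))) := by
            intro h
            have h1 : Tm n τ (-(Tm n τ (k : ZMod (n-1)))) = (k : ZMod (n-1)) := by
              rw [hg, ← h, neg_neg]
            have h2 := congrArg (Tm n τ) h1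
            rw [Tm_Tm S] at h2
            exact h4C h2
          have z24 : -(k : ZMod (n-1)) ≠ -(Tm n τ (k : ZMod (n-1))) :=
            fun h => z01 (neg_inj.1 h)
          have z25 : -(k : ZMod (n-1)) ≠ Tm n τ (-(Tm n τ (k : ZMod (n-1)))) := by
            intro h
            rw [hg] at h
            exact z03 (neg_inj.1 h)
          have z34 : Tm n τ (-(k : ZMod (n-1))) ≠ -(Tm n τ (k : ZMod (n-1))) := by
            intro h
            have h2 := congrArg (Tm n τ) h
            rw [Tm_Tm S, hg] at h2
            exact z03 (neg_inj.1 h2)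
          have z35 : Tm n τ (-(k : ZMod (n-1))) ≠ Tm n τ (-(Tm n τ (k : ZMod (n-1)))) :=
            fun h => z24 (Tm_inj S h)
          have z45 : -(Tm n τ (k : ZMod (n-1))) ≠ Tm n τ (-(Tm n τ (k : ZMod (n-1)))) := by
            intro h
            rw [hg] at h
            exact z13 (neg_inj.1 h)
          have ND : ∀ a b : ℕ, (((a:ℕ) : ZMod (n-1)) ≠ ((b:ℕ) : ZMod (n-1))) → a ≠ b :=
            fun a b hz h => hz (by rw [h])
          have D01 : k ≠ τ k := ND _ _ (by rw [c1]; exact z01)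
          have D02 : k ≠ n - 1 - k := ND _ _ (by rw [c2]; exact hcC)
          have D03 : k ≠ τ (n - 1 - k) := ND _ _ (by rw [c3]; exact z03)
          have D04 : k ≠ n - 1 - τ k := ND _ _ (by rw [c4]; exact z04)
          have D05 : k ≠ τ (n - 1 - τ k) := ND _ _ (by rw [c5]; exact z05)
          have D12 : τ k ≠ n - 1 - k := ND _ _ (by rw [c1, c2]; exact htcC)
          have D13 : τ k ≠ τ (n - 1 - k) := ND _ _ (by rw [c1, c3]; exact z13)
          have D14 : τ k ≠ n - 1 - τ k := ND _ _ (by rw [c1, c4]; exact z14)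
          have D15 : τ k ≠ τ (n - 1 - τ k) := ND _ _ (by rw [c1, c5]; exact z15)
          have D23 : n - 1 - k ≠ τ (n - 1 - k) := ND _ _ (by rw [c2, c3]; exact z23)
          have D24 : n - 1 - k ≠ n - 1 - τ k := ND _ _ (by rw [c2, c4]; exact z24)
          have D25 : n - 1 - k ≠ τ (n - 1 - τ k) := ND _ _ (by rw [c2, c5]; exact z25)
          have D34 : τ (n - 1 - k) ≠ n - 1 - τ k := ND _ _ (by rw [c3, c4]; exact z34)
          have D35 : τ (n - 1 - k) ≠ τ (n - 1 - τ k) := ND _ _ (by rw [c3, c5]; exact z35)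
          have D45 : n - 1 - τ k ≠ τ (n - 1 - τ k) := ND _ _ (by rw [c4, c5]; exact z45)
          have hcard : Ob.ncard = 6 := by
            rw [horb]
            exact ncard6 D01 D02 D03 D04 D05 D12 D13 D14 D15 D23 D24 D25 D34 D35 D45
          exact ⟨Or.inr (Or.inr (Or.inr hcard)), fun h => by rw [hcard] at h; omega,
            fun h => by rw [hcard] at h; omega, fun h => absurd h hcC⟩

theorem orbit_sub (S : Setup n σ ρ τ) {k : ℕ} (hk1 : 1 ≤ k) (hk2 : k ≤ n - 2) :
    ∀ m ∈ orbitOf (Subgroup.closure ({ρ, τ} : Set (Equiv.Perm ℕ))) k,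
      1 ≤ m ∧ m ≤ n - 2 := by
  intro m hm
  have m1 := tau_mem S hk1 hk2
  have m2 : 1 ≤ n - 1 - k ∧ n - 1 - k ≤ n - 2 := ⟨by have := S.hn; omega, by omega⟩
  have m3 := tau_mem S m2.1 m2.2
  have m4 : 1 ≤ n - 1 - τ k ∧ n - 1 - τ k ≤ n - 2 := ⟨by have := S.hn; omega, by omega⟩
  have m5 := tau_mem S m4.1 m4.2
  rw [orbit_explicit S k, (rho_mem S hk1 hk2).1, (rho_mem S m1.1 m1.2).1] at hm
  simp only [Set.mem_insert_iff, Set.mem_singleton_iff] at hm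
  rcases hm with rfl | rfl | rfl | rfl | rfl | rfl
  · exact ⟨hk1, hk2⟩
  · exact m1
  · exact m2
  · exact m3
  · exact m4
  · exact m5

end CondAux

set_option maxHeartbeats 1600000 in
/-- If `τ ∈ S_n` satisfies condition (C), then all the orbits of the action of `⟨ρ,τ⟩`
on `{1,...,n}` have six elements, except for either one or two orbits with two elements
(one of which is `{n-1,n}`) and, if `n` is odd, exactly one orbit with one or three
elements; if `n` is even there is no orbit with one or three elements. -/
theorem orbits_of_conditionC (n : ℕ) (hn : 2 ≤ n) (σ ρ τ : Equiv.Perm ℕ)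
    (hσ : ∀ k, σ k = sigmaFun n k) (hρ : ∀ k, ρ k = rhoFun n k)
    (hC : ConditionC n σ ρ τ) :
    orbitOf (Subgroup.closure {ρ, τ}) (n - 1) = ({n - 1, n} : Set ℕ) ∧
    (∀ k : ℕ, 1 ≤ k → k ≤ n →
      (orbitOf (Subgroup.closure {ρ, τ}) k).ncard = 1 ∨
      (orbitOf (Subgroup.closure {ρ, τ}) k).ncard = 2 ∨
      (orbitOf (Subgroup.closure {ρ, τ}) k).ncard = 3 ∨
      (orbitOf (Subgroup.closure {ρ, τ}) k).ncard = 6) ∧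
    ({C : Set ℕ | (∃ k : ℕ, 1 ≤ k ∧ k ≤ n ∧ C = orbitOf (Subgroup.closure {ρ, τ}) k) ∧
        C.ncard = 2}.ncard = 1 ∨
     {C : Set ℕ | (∃ k : ℕ, 1 ≤ k ∧ k ≤ n ∧ C = orbitOf (Subgroup.closure {ρ, τ}) k) ∧
        C.ncard = 2}.ncard = 2) ∧
    (Odd n →
      {C : Set ℕ | (∃ k : ℕ, 1 ≤ k ∧ k ≤ n ∧ C = orbitOf (Subgroup.closure {ρ, τ}) k) ∧
        (C.ncard = 1 ∨ C.ncard = 3)}.ncard = 1) ∧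
    (Even n → ∀ k : ℕ, 1 ≤ k → k ≤ n →
      (orbitOf (Subgroup.closure {ρ, τ}) k).ncard ≠ 1 ∧
      (orbitOf (Subgroup.closure {ρ, τ}) k).ncard ≠ 3) := by
  have S : CondAux.Setup n σ ρ τ := ⟨hn, hσ, hρ, hC⟩
  have hb1 := CondAux.orbit_nm1 S
  have hbn := CondAux.orbit_n S
  have hpair_card : ({n-1, n} : Set ℕ).ncard = 2 := Set.ncard_pair (by omega)
  refine ⟨hb1, ?_, ?_, ?_, ?_⟩
  · -- all orbits have size 1, 2, 3 or 6
    intro k h1 h2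
    rcases (by omega : (1 ≤ k ∧ k ≤ n-2) ∨ k = n-1 ∨ k = n) with ⟨hk1, hk2⟩ | rfl | rfl
    · exact (CondAux.classify S hk1 hk2).1
    · rw [hb1, hpair_card]; tauto
    · rw [hbn, hpair_card]; tauto
  · -- one or two orbits of size two
    by_cases hex : ∃ k0, (1 ≤ k0 ∧ k0 ≤ n-2) ∧
        (orbitOf (Subgroup.closure {ρ, τ}) k0).ncard = 2
    · right
      obtain ⟨k0, ⟨hk01, hk02⟩, hk0c⟩ := hex
      have hset : {C : Set ℕ | (∃ k : ℕ, 1 ≤ k ∧ k ≤ n ∧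
            C = orbitOf (Subgroup.closure {ρ, τ}) k) ∧ C.ncard = 2}
          = {({n-1, n} : Set ℕ), orbitOf (Subgroup.closure {ρ, τ}) k0} := by
        ext C
        simp only [Set.mem_setOf_eq, Set.mem_insert_iff, Set.mem_singleton_iff]
        constructor
        · rintro ⟨⟨k, hk1, hk2, rfl⟩, hc2⟩
          rcases (by omega : (1 ≤ k ∧ k ≤ n-2) ∨ k = n-1 ∨ k = n) with ⟨ha, hb⟩ | rfl | rfl
          · right
            have hTk := (CondAux.classify S ha hb).2.2.1 hc2
            have hTk0 := (CondAux.classify S hk01 hk02).2.2.1 hk0c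
            have hkz := CondAux.cast_mem S ha hb
            have hk0z := CondAux.cast_mem S hk01 hk02
            by_cases hsum : ((k:ℕ) : ZMod (n-1)) + ((k0:ℕ) : ZMod (n-1)) = 0
            · have hTmk0 : ((k:ℕ) : ZMod (n-1)) = CondAux.Tm n τ ((k0:ℕ) : ZMod (n-1)) := by
                rw [hTk0]; linear_combination hsum
              have hkk : k = τ k0 := by
                apply CondAux.mem_unique S ha (by omega)
                  (CondAux.tau_mem S hk01 hk02).1
                  (by have := (CondAux.tau_mem S hk01 hk02).2; omega)
                rw [CondAux.Tm_cast S hk01 hk02]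
                exact hTmk0
              rw [hkk]
              exact CondAux.orbit_eq_of_mem ⟨τ, CondAux.tau_mem_H, rfl⟩
            · have hzeq := CondAux.F_rigid S hkz.2 hk0z.2 hTk hTk0 hsum
              have : k = k0 := CondAux.mem_unique S ha (by omega) hk01 (by omega) hzeq
              rw [this]
          · left; exact hb1
          · left; exact hbn
        · rintro (rfl | rfl)
          · exact ⟨⟨n-1, by omega, by omega, hb1.symm⟩, hpair_card⟩
          · exact ⟨⟨k0, hk01, by omega, rfl⟩, hk0c⟩
      rw [hset]
      have hne : ({n-1, n} : Set ℕ) ≠ orbitOf (Subgroup.closure {ρ, τ}) k0 := by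
        intro h
        have hn_mem : (n : ℕ) ∈ orbitOf (Subgroup.closure {ρ, τ}) k0 := by
          rw [← h]; right; rfl
        have := CondAux.orbit_sub S hk01 hk02 n hn_mem
        omega
      exact Set.ncard_pair hne
    · left
      have hset : {C : Set ℕ | (∃ k : ℕ, 1 ≤ k ∧ k ≤ n ∧
            C = orbitOf (Subgroup.closure {ρ, τ}) k) ∧ C.ncard = 2}
          = {({n-1, n} : Set ℕ)} := by
        ext C
        simp only [Set.mem_setOf_eq, Set.mem_singleton_iff]
        constructor
        · rintro ⟨⟨k, hk1, hk2, rfl⟩, hc2⟩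
          rcases (by omega : (1 ≤ k ∧ k ≤ n-2) ∨ k = n-1 ∨ k = n) with ⟨ha, hb⟩ | rfl | rfl
          · exact absurd ⟨k, ⟨ha, hb⟩, hc2⟩ hex
          · exact hb1
          · exact hbn
        · rintro rfl
          exact ⟨⟨n-1, by omega, by omega, hb1.symm⟩, hpair_card⟩
      rw [hset]
      exact Set.ncard_singleton _
  · -- odd case
    intro hodd
    obtain ⟨mm, hmm⟩ := hodd
    have hz0 : 2 * ((n-1)/2) = n - 1 := by omega
    have hz01 : 1 ≤ (n-1)/2 := by omega
    have hz02 : (n-1)/2 ≤ n - 2 := by omega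
    have hz0fix : (((n-1)/2 : ℕ) : ZMod (n-1)) = -(((n-1)/2 : ℕ) : ZMod (n-1)) := by
      have h0 : (((n-1)/2 + (n-1)/2 : ℕ) : ZMod (n-1)) = 0 := by
        rw [show (n-1)/2 + (n-1)/2 = n-1 by omega]
        exact ZMod.natCast_self _
      push_cast at h0
      linear_combination h0
    have hz0card := (CondAux.classify S hz01 hz02).2.2.2 hz0fix
    have hset : {C : Set ℕ | (∃ k : ℕ, 1 ≤ k ∧ k ≤ n ∧
          C = orbitOf (Subgroup.closure {ρ, τ}) k) ∧ (C.ncard = 1 ∨ C.ncard = 3)}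
        = {orbitOf (Subgroup.closure {ρ, τ}) ((n-1)/2)} := by
      ext C
      simp only [Set.mem_setOf_eq, Set.mem_singleton_iff]
      constructor
      · rintro ⟨⟨k, hk1, hk2, rfl⟩, hc13⟩
        rcases (by omega : (1 ≤ k ∧ k ≤ n-2) ∨ k = n-1 ∨ k = n) with ⟨ha, hb⟩ | rfl | rfl
        · obtain ⟨z, hzO, hz1, hz2, hz2t⟩ := (CondAux.classify S ha hb).2.1 hc13
          have hzz : z = (n-1)/2 := by omega
          rw [← CondAux.orbit_eq_of_mem hzO, hzz]
        · exfalso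
          rcases hc13 with h | h <;> (rw [hb1, hpair_card] at h; omega)
        · exfalso
          rcases hc13 with h | h <;> (rw [hbn, hpair_card] at h; omega)
      · rintro rfl
        exact ⟨⟨(n-1)/2, hz01, by omega, rfl⟩, hz0card⟩
    rw [hset]
    exact Set.ncard_singleton _
  · -- even case
    intro heven k h1 h2
    obtain ⟨mm, hmm⟩ := heven
    rcases (by omega : (1 ≤ k ∧ k ≤ n-2) ∨ k = n-1 ∨ k = n) with ⟨ha, hb⟩ | rfl | rfl
    · constructor <;> intro hcard
      · obtain ⟨z, _, _, _, hz2t⟩ := (CondAux.classify S ha hb).2.1 (Or.inl hcard)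
        omega
      · obtain ⟨z, _, _, _, hz2t⟩ := (CondAux.classify S ha hb).2.1 (Or.inr hcard)
        omega
    · rw [hb1, hpair_card]; omega
    · rw [hbn, hpair_card]; omega
end

section
/- If n ≡ 15 (mod 24) or n ≡ 21 (mod 24), then no permutation τ ∈ S_n satisfies condition (C). (Hence the incidence graph of K_n is not a G-graph for such n.) -/
namespace NoCAux

open Equiv

structure Setup (m h : ℕ) (σ τ : Equiv.Perm ℕ) : Prop where
  hmh : m = 2 * h
  hh7 : 7 ≤ h
  hs : ∀ x : ℕ, 1 ≤ x → x ≤ m → 1 ≤ σ x ∧ σ x ≤ m ∧ (σ x : ZMod m) = (x : ZMod m) + 1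
  hsf : ∀ x : ℕ, x = 0 ∨ m + 1 ≤ x → σ x = x
  ht2 : ∀ x : ℕ, τ (τ x) = x
  htn : τ (m + 1) = m
  hti : ∀ x : ℕ, 1 ≤ x → x ≤ m - 1 → 1 ≤ τ x ∧ τ x ≤ m - 1
  hc : ∀ k : ℕ, 1 ≤ k → k ≤ m - 1 → ∃ A B : ℕ, τ * σ ^ k * τ = σ ^ A * τ * σ ^ B

def IsD (σ τ : Equiv.Perm ℕ) (g : Equiv.Perm ℕ) : Prop :=
  (∃ i : ℕ, g = σ ^ i) ∨ ∃ a b : ℕ, g = σ ^ a * τ * σ ^ b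

def kap (m h : ℕ) (σ τ : Equiv.Perm ℕ) (a : ZMod m) : Equiv.Perm ℕ :=
  σ ^ a.val * τ * σ ^ (((h : ℕ) : ZMod m) - a).val

set_option linter.unusedSectionVars false

namespace Setup

variable {m h : ℕ} {σ τ : Equiv.Perm ℕ} (S : Setup m h σ τ)
include S

lemma m14 : 14 ≤ m := by have := S.hh7; have := S.hmh; omega

lemma nz : NeZero m := ⟨by have := S.m14; omega⟩

lemma tm : τ m = m + 1 := by
  conv_lhs => rw [← S.htn]
  exact S.ht2 (m+1)

lemma ht2' : τ * τ = 1 := by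
  ext x
  simp [Equiv.Perm.mul_apply, S.ht2 x]

lemma spow : ∀ k x : ℕ, 1 ≤ x → x ≤ m →
    1 ≤ (σ ^ k) x ∧ (σ ^ k) x ≤ m ∧ (((σ ^ k) x : ℕ) : ZMod m) = (x : ZMod m) + k := by
  intro k
  induction k with
  | zero =>
      intro x h1 h2
      refine ⟨by simpa using h1, by simpa using h2, by simp⟩
  | succ k ih =>
      intro x h1 h2
      have hx := ih x h1 h2
      have hss := S.hs _ hx.1 hx.2.1
      have hstep : (σ ^ (k+1)) x = σ ((σ ^ k) x) := by
        rw [pow_succ']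
        rfl
      rw [hstep]
      refine ⟨hss.1, hss.2.1, ?_⟩
      rw [hss.2.2, hx.2.2]
      push_cast
      ring

lemma spfix : ∀ k x : ℕ, x = 0 ∨ m + 1 ≤ x → (σ ^ k) x = x := by
  intro k
  induction k with
  | zero => intro x _; rfl
  | succ k ih =>
      intro x hx
      have hstep : (σ ^ (k+1)) x = σ ((σ ^ k) x) := by rw [pow_succ']; rfl
      rw [hstep, ih x hx, S.hsf x hx]

lemma inj : ∀ x y : ℕ, 1 ≤ x → x ≤ m → 1 ≤ y → y ≤ m → ((x : ZMod m) = (y : ZMod m)) → x = y := by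
  haveI := S.nz
  intro x y hx1 hx2 hy1 hy2 hxy
  rcases eq_or_lt_of_le hx2 with hx | hx
  · rcases eq_or_lt_of_le hy2 with hy | hy
    · omega
    · exfalso
      subst hx
      rw [ZMod.natCast_self] at hxy
      have := ZMod.val_cast_of_lt hy
      rw [← hxy] at this
      simp only [ZMod.val_zero] at this
      omega
  · rcases eq_or_lt_of_le hy2 with hy | hy
    · exfalso
      subst hy
      rw [ZMod.natCast_self] at hxy
      have := ZMod.val_cast_of_lt hx
      rw [hxy] at this
      simp only [ZMod.val_zero] at this
      omega
    · have h1 := ZMod.val_cast_of_lt hx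
      have h2 := ZMod.val_cast_of_lt hy
      rw [hxy] at h1
      omega

lemma sigm : σ ^ m = 1 := by
  ext x
  simp only [Equiv.Perm.one_apply]
  by_cases hx : 1 ≤ x ∧ x ≤ m
  · have hp := S.spow m x hx.1 hx.2
    refine S.inj _ _ hp.1 hp.2.1 hx.1 hx.2 ?_
    rw [hp.2.2, ZMod.natCast_self, add_zero]
  · exact S.spfix m x (by omega)

lemma modp {i j : ℕ} (hij : (i : ZMod m) = (j : ZMod m)) : σ ^ i = σ ^ j := by
  have h1 : i % m = j % m := (ZMod.natCast_eq_natCast_iff' i j m).mp hij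
  have e : ∀ i : ℕ, σ ^ i = σ ^ (i % m) := by
    intro i
    conv_lhs => rw [← Nat.mod_add_div i m]
    rw [pow_add, pow_mul, S.sigm, one_pow, mul_one]
  rw [e i, e j, h1]

lemma pone {j : ℕ} (hj : σ ^ j = 1) : (j : ZMod m) = 0 := by
  have hp := S.spow j m (by have := S.m14; omega) le_rfl
  rw [hj] at hp
  simp only [Equiv.Perm.one_apply, ZMod.natCast_self, zero_add] at hp
  exact hp.2.2.symm

lemma tformn (a b : ℕ) : 1 ≤ (σ ^ a * τ * σ ^ b) (m+1) ∧ (σ ^ a * τ * σ ^ b) (m+1) ≤ m ∧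
    (((σ ^ a * τ * σ ^ b) (m+1) : ℕ) : ZMod m) = (a : ZMod m) := by
  have h1 : (σ ^ b) (m+1) = m + 1 := S.spfix b _ (Or.inr le_rfl)
  have happ : (σ ^ a * τ * σ ^ b) (m+1) = (σ ^ a) (τ ((σ ^ b) (m+1))) := rfl
  rw [happ, h1, S.htn]
  have hp := S.spow a m (by have := S.m14; omega) le_rfl
  exact ⟨hp.1, hp.2.1, by rw [hp.2.2, ZMod.natCast_self, zero_add]⟩

lemma rearr (a b c d : ℕ) :
    σ ^ a * τ * σ ^ b * (σ ^ c * τ * σ ^ d) = σ ^ a * (τ * (σ ^ b * σ ^ c) * τ) * σ ^ d := by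
  group

lemma isdtau : IsD σ τ τ := Or.inr ⟨0, 0, by simp⟩

lemma dmul {g₁ g₂ : Equiv.Perm ℕ} (h₁ : IsD σ τ g₁) (h₂ : IsD σ τ g₂) : IsD σ τ (g₁ * g₂) := by
  haveI := S.nz
  rcases h₁ with ⟨i, rfl⟩ | ⟨a, b, rfl⟩
  · rcases h₂ with ⟨j, rfl⟩ | ⟨c, d, rfl⟩
    · exact Or.inl ⟨i + j, (pow_add σ i j).symm⟩
    · exact Or.inr ⟨i + c, d, by rw [pow_add]; group⟩
  · rcases h₂ with ⟨j, rfl⟩ | ⟨c, d, rfl⟩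
    · exact Or.inr ⟨a, b + j, by rw [pow_add]; group⟩
    · have hee : ((b + c : ℕ) : ZMod m) = (((b + c) % m : ℕ) : ZMod m) := by
        rw [ZMod.natCast_mod]
      have hbc : σ ^ (b + c) = σ ^ ((b + c) % m) := S.modp hee
      rcases Nat.eq_zero_or_pos ((b + c) % m) with he0 | hep
      · refine Or.inl ⟨a + d, ?_⟩
        have h1 : σ ^ b * σ ^ c = 1 := by
          rw [← pow_add, hbc, he0, pow_zero]
        rw [S.rearr, h1, mul_one, S.ht2', mul_one, ← pow_add]
      · have hlt : (b + c) % m ≤ m - 1 := by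
          have := Nat.mod_lt (b + c) (show 0 < m by have := S.m14; omega)
          omega
        obtain ⟨A, B, hAB⟩ := S.hc ((b + c) % m) hep hlt
        refine Or.inr ⟨a + A, B + d, ?_⟩
        have h1 : τ * (σ ^ b * σ ^ c) * τ = σ ^ A * τ * σ ^ B := by
          rw [← pow_add, hbc, ← hAB]
        rw [S.rearr, h1]
        rw [pow_add, pow_add]
        group

lemma dinv {g : Equiv.Perm ℕ} (hg : IsD σ τ g) : IsD σ τ g⁻¹ := by
  haveI := S.nz
  have hm0 : 0 < m := by have := S.m14; omega
  have key : ∀ i : ℕ, σ ^ i * σ ^ (m - i % m) = 1 := by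
    intro i
    rw [← pow_add]
    have : ((i + (m - i % m) : ℕ) : ZMod m) = ((0 : ℕ) : ZMod m) := by
      have hle : i % m ≤ m := le_of_lt (Nat.mod_lt i hm0)
      have h1 : ((i : ℕ) : ZMod m) = ((i % m : ℕ) : ZMod m) := by
        rw [ZMod.natCast_mod]
      push_cast [Nat.cast_sub hle]
      rw [ZMod.natCast_self]
      rw [← ZMod.natCast_mod i m]
      ring
    rw [S.modp this, pow_zero]
  rcases hg with ⟨i, rfl⟩ | ⟨a, b, rfl⟩
  · exact Or.inl ⟨m - i % m, inv_eq_of_mul_eq_one_right (key i)⟩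
  · refine Or.inr ⟨m - b % m, m - a % m, inv_eq_of_mul_eq_one_right ?_⟩
    rw [S.rearr, key b, mul_one, S.ht2', mul_one, key a]

lemma dfixn {g : Equiv.Perm ℕ} (hg : IsD σ τ g) (hfix : g (m + 1) = m + 1) :
    ∃ i : ℕ, g = σ ^ i := by
  rcases hg with ⟨i, rfl⟩ | ⟨a, b, rfl⟩
  · exact ⟨i, rfl⟩
  · exfalso
    have := S.tformn a b
    omega

lemma sur (x y : ℕ) (hx1 : 1 ≤ x) (hx2 : x ≤ m + 1) (hy1 : 1 ≤ y) (hy2 : y ≤ m + 1)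
    (hxy : x ≠ y) : ∃ g : Equiv.Perm ℕ, IsD σ τ g ∧ g (m + 1) = x ∧ g m = y := by
  haveI := S.nz
  have hm0 : 0 < m := by have := S.m14; omega
  rcases eq_or_lt_of_le hx2 with hx | hx
  · -- x = m + 1
    have hym : y ≤ m := by omega
    refine ⟨σ ^ y, Or.inl ⟨y, rfl⟩, ?_, ?_⟩
    · rw [S.spfix y _ (Or.inr le_rfl), hx]
    · have hp := S.spow y m hm0 le_rfl
      refine S.inj _ _ hp.1 hp.2.1 hy1 hym ?_
      rw [hp.2.2, ZMod.natCast_self, zero_add]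
  · have hxm : x ≤ m := by omega
    rcases eq_or_lt_of_le hy2 with hy | hy
    · -- y = m + 1
      refine ⟨σ ^ x * τ * σ ^ 0, Or.inr ⟨x, 0, rfl⟩, ?_, ?_⟩
      · have : (σ ^ x * τ * σ ^ 0) (m+1) = (σ ^ x) (τ ((σ ^ 0) (m+1))) := rfl
        rw [this, pow_zero, Equiv.Perm.one_apply, S.htn]
        have hp := S.spow x m hm0 le_rfl
        refine S.inj _ _ hp.1 hp.2.1 hx1 hxm ?_
        rw [hp.2.2, ZMod.natCast_self, zero_add]
      · have : (σ ^ x * τ * σ ^ 0) m = (σ ^ x) (τ ((σ ^ 0) m)) := rfl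
        rw [this, pow_zero, Equiv.Perm.one_apply, S.tm, S.spfix x _ (Or.inr le_rfl), hy]
    · -- x, y ≤ m
      have hym : y ≤ m := by omega
      -- v : the element of [1, m-1] congruent to y - x
      set z : ZMod m := (y : ZMod m) - (x : ZMod m) with hz
      have hzne : z ≠ 0 := by
        intro h0
        have : (y : ZMod m) = (x : ZMod m) := by
          rw [hz] at h0
          linear_combination h0
        exact hxy (S.inj y x hy1 hym hx1 hxm this).symm
      set v : ℕ := z.val with hv
      have hv1 : 1 ≤ v := by
        rcases Nat.eq_zero_or_pos v with h0 | h1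
        · exact absurd ((ZMod.val_eq_zero z).mp h0) hzne
        · exact h1
      have hvm : v ≤ m - 1 := by
        have := ZMod.val_lt z
        omega
      have hvz : ((v : ℕ) : ZMod m) = z := ZMod.natCast_zmod_val z
      have htv := S.hti v hv1 hvm
      refine ⟨σ ^ x * τ * σ ^ (τ v), Or.inr ⟨x, τ v, rfl⟩, ?_, ?_⟩
      · have : (σ ^ x * τ * σ ^ (τ v)) (m+1) = (σ ^ x) (τ ((σ ^ (τ v)) (m+1))) := rfl
        rw [this, S.spfix _ _ (Or.inr le_rfl), S.htn]
        have hp := S.spow x m hm0 le_rfl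
        refine S.inj _ _ hp.1 hp.2.1 hx1 hxm ?_
        rw [hp.2.2, ZMod.natCast_self, zero_add]
      · have happ : (σ ^ x * τ * σ ^ (τ v)) m = (σ ^ x) (τ ((σ ^ (τ v)) m)) := rfl
        have hp1 := S.spow (τ v) m hm0 le_rfl
        have hsv : (σ ^ (τ v)) m = τ v := by
          refine S.inj _ _ hp1.1 hp1.2.1 htv.1 (by omega) ?_
          rw [hp1.2.2, ZMod.natCast_self, zero_add]
        rw [happ, hsv, S.ht2 v]
        have hp2 := S.spow v m hm0 le_rfl
        have hvm' : v ≤ m := by omega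
        have hp3 := S.spow x v hv1 hvm'
        refine S.inj _ _ hp3.1 hp3.2.1 hy1 hym ?_
        rw [hp3.2.2, hvz, hz]
        ring

lemma s1 {q : Equiv.Perm ℕ} (hq : IsD σ τ q) (x y : ℕ)
    (hx1 : 1 ≤ x) (hx2 : x ≤ m + 1) (hy1 : 1 ≤ y) (hy2 : y ≤ m + 1) (hxy : x ≠ y)
    (hfx : q x = x) (hfy : q y = y) : q = 1 := by
  obtain ⟨g, hgD, hgn, hgm⟩ := S.sur x y hx1 hx2 hy1 hy2 hxy
  have hD : IsD σ τ (g⁻¹ * q * g) := S.dmul (S.dmul (S.dinv hgD) hq) hgD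
  have h1 : (g⁻¹ * q * g) (m + 1) = m + 1 := by
    have : (g⁻¹ * q * g) (m+1) = g⁻¹ (q (g (m+1))) := rfl
    rw [this, hgn, hfx, ← hgn]
    exact Equiv.symm_apply_apply g (m+1)
  have h2 : (g⁻¹ * q * g) m = m := by
    have : (g⁻¹ * q * g) m = g⁻¹ (q (g m)) := rfl
    rw [this, hgm, hfy, ← hgm]
    exact Equiv.symm_apply_apply g m
  obtain ⟨i, hi⟩ := S.dfixn hD h1
  have hm0 : 0 < m := by have := S.m14; omega
  have hp := S.spow i m hm0 le_rfl
  rw [hi] at h2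
  have hi0 : (i : ZMod m) = 0 := by
    have h3 : (((σ ^ i) m : ℕ) : ZMod m) = ((m : ℕ) : ZMod m) := by rw [h2]
    rw [hp.2.2, ZMod.natCast_self, zero_add] at h3
    exact h3

  have hi0' : (i : ZMod m) = ((0 : ℕ) : ZMod m) := by rw [hi0]; simp
  have hgq : g⁻¹ * q * g = 1 := by
    rw [hi, S.modp hi0', pow_zero]
  have : q = g * (g⁻¹ * q * g) * g⁻¹ := by group
  rw [hgq] at this
  simpa using this


lemma clem (c : ℕ) (hc1 : 1 ≤ c) (hc2 : c ≤ m - 1) (he : τ = σ ^ (m - c) * τ * σ ^ c) :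
    False := by
  haveI := S.nz
  have hm0 : 0 < m := by have := S.m14; omega
  have happ : (σ ^ (m - c) * τ * σ ^ c) m = (σ ^ (m - c)) (τ ((σ ^ c) m)) := rfl
  have hp := S.spow c m hm0 le_rfl
  have hcm : (σ ^ c) m = c := by
    refine S.inj _ _ hp.1 hp.2.1 hc1 (by omega) ?_
    rw [hp.2.2, ZMod.natCast_self, zero_add]
  have htc := S.hti c hc1 hc2
  have hp2 := S.spow (m - c) (τ c) htc.1 (by omega)
  have : τ m = (σ ^ (m - c)) (τ c) := by
    conv_lhs => rw [he]
    rw [happ, hcm]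
  rw [S.tm] at this
  omega

lemma l1 (c w : ℕ) (hc1 : 1 ≤ c) (hc2 : c ≤ m - 1) (hw1 : 1 ≤ w) (hw2 : w ≤ m + 1) :
    τ ((σ ^ c) w) ≠ (σ ^ c) (τ w) := by
  haveI := S.nz
  have hm0 : 0 < m := by have := S.m14; omega
  intro heq
  have hcm : (σ ^ c) m = c := by
    have hp := S.spow c m hm0 le_rfl
    refine S.inj _ _ hp.1 hp.2.1 hc1 (by omega) ?_
    rw [hp.2.2, ZMod.natCast_self, zero_add]
  rcases eq_or_lt_of_le hw2 with hw | hw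
  · -- w = m + 1
    rw [hw, S.spfix c _ (Or.inr le_rfl), S.htn, hcm] at heq
    omega
  · have hwm : w ≤ m := by omega
    rcases eq_or_lt_of_le hwm with hw' | hw'
    · -- w = m
      rw [hw', hcm, S.tm, S.spfix c _ (Or.inr le_rfl)] at heq
      have := S.hti c hc1 hc2
      omega
    · -- w ≤ m - 1
      have hwm1 : w ≤ m - 1 := by omega
      have hy := S.hti w hw1 hwm1
      set y := τ w with hydef
      -- τc
      set τc : Equiv.Perm ℕ := σ ^ (m - c) * τ * σ ^ c with htc
      have hsmm : σ ^ (m - c) * σ ^ c = 1 := by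
        rw [← pow_add]
        have : m - c + c = m := by omega
        rw [this, S.sigm]
      have htcw : τc w = y := by
        have h1 : τc w = (σ ^ (m - c)) (τ ((σ ^ c) w)) := rfl
        rw [h1, heq]
        have h2 : (σ ^ (m - c)) ((σ ^ c) y) = (σ ^ (m - c) * σ ^ c) y := rfl
        rw [h2, hsmm]
        rfl
      have htcinv : τc * τc = 1 := by
        rw [htc]
        calc σ ^ (m - c) * τ * σ ^ c * (σ ^ (m - c) * τ * σ ^ c)
            = σ ^ (m - c) * (τ * (σ ^ c * σ ^ (m - c)) * τ) * σ ^ c := S.rearr _ _ _ _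
          _ = 1 := by
              rw [← pow_add]
              have : c + (m - c) = m := by omega
              rw [this, S.sigm, mul_one, S.ht2', mul_one, hsmm]
      have htcD : IsD σ τ τc := Or.inr ⟨m - c, c, rfl⟩
      rcases eq_or_ne y w with hyw | hyw
      · -- y = w : both τ and τc fix w
        have hτw : τ w = w := hyw
        -- g with g w = m+1
        set g : Equiv.Perm ℕ := τ * σ ^ (m - w) with hgdef
        have hgD : IsD σ τ g := Or.inr ⟨0, m - w, by simp [hgdef]⟩
        have hgw : g w = m + 1 := by
          have h1 : g w = τ ((σ ^ (m - w)) w) := rfl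
          have hp := S.spow (m - w) w hw1 hwm
          have h2 : (σ ^ (m - w)) w = m := by
            refine S.inj _ _ hp.1 hp.2.1 hm0 le_rfl ?_
            rw [hp.2.2, ZMod.natCast_self]
            have : ((m - w : ℕ) : ZMod m) = ((m : ℕ) : ZMod m) - ((w : ℕ) : ZMod m) := by
              rw [Nat.cast_sub (by omega)]
            rw [this, ZMod.natCast_self]
            ring
          rw [h1, h2, S.tm]
        -- the conjugate elements
        have key : ∀ u : Equiv.Perm ℕ, IsD σ τ u → u w = w → u * u = 1 → u ≠ 1 →
            g * u * g⁻¹ = σ ^ h := by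
          intro u huD huw huu hune
          have hD : IsD σ τ (g * u * g⁻¹) := S.dmul (S.dmul hgD huD) (S.dinv hgD)
          have hfixn : (g * u * g⁻¹) (m + 1) = m + 1 := by
            have h1 : (g * u * g⁻¹) (m+1) = g (u (g⁻¹ (m+1))) := rfl
            have h2 : g⁻¹ (m + 1) = w := by
              rw [← hgw]
              exact Equiv.symm_apply_apply g w
            rw [h1, h2, huw, hgw]
          obtain ⟨i, hi⟩ := S.dfixn hD hfixn
          have hsq : σ ^ i * σ ^ i = 1 := by
            rw [← hi]
            calc g * u * g⁻¹ * (g * u * g⁻¹) = g * (u * u) * g⁻¹ := by group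
              _ = 1 := by rw [huu]; group
          have h2i : ((i + i : ℕ) : ZMod m) = 0 := S.pone (by rw [pow_add]; exact hsq)
          have hdvd : m ∣ i + i := by
            rwa [ZMod.natCast_eq_zero_iff] at h2i
          have hine : (i : ZMod m) ≠ 0 := by
            intro h0
            apply hune
            have h0' : (i : ZMod m) = ((0 : ℕ) : ZMod m) := by rw [h0]; simp
            have hgu : g * u * g⁻¹ = 1 := by rw [hi, S.modp h0', pow_zero]
            have hu2 : u = g⁻¹ * (g * u * g⁻¹) * g := by group
            rw [hu2, hgu]
            group
          obtain ⟨t, ht⟩ := hdvd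
          have hm2 : m = 2 * h := S.hmh
          have h2t : 2 * i = 2 * (h * t) := by
            rw [two_mul, ht, hm2]; ring
          have hit : i = h * t := Nat.eq_of_mul_eq_mul_left (by norm_num) h2t
          have hih : (i : ZMod m) = ((h : ℕ) : ZMod m) := by
            rcases Nat.even_or_odd t with ⟨s, hs⟩ | ⟨s, hs⟩
            · exfalso
              apply hine
              rw [ZMod.natCast_eq_zero_iff]
              exact ⟨s, by rw [hit, hs, hm2]; ring⟩
            · have hieq : i = h + m * s := by rw [hit, hs, hm2]; ring
              rw [ZMod.natCast_eq_natCast_iff', hieq, Nat.add_mul_mod_self_left]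
          rw [hi, S.modp hih]
        have h1 := key τ S.isdtau hτw S.ht2' (by
          intro h0
          have : τ (m+1) = (1 : Equiv.Perm ℕ) (m+1) := by rw [h0]
          rw [S.htn] at this
          simp at this)
        have h2 := key τc htcD (by rw [htcw, hyw]) htcinv (by
          intro h0
          have h4 : τc (m+1) = (1 : Equiv.Perm ℕ) (m+1) := by rw [h0]
          simp only [Equiv.Perm.one_apply] at h4
          have h3 : τc (m+1) = (σ ^ (m - c)) (τ ((σ ^ c) (m+1))) := rfl
          rw [h3, S.spfix c _ (Or.inr le_rfl), S.htn] at h4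
          have hp := S.spow (m - c) m hm0 le_rfl
          omega)
        have : g * τ * g⁻¹ = g * τc * g⁻¹ := by rw [h1, h2]
        have hττc : τ = τc := by
          have h3 : τ = g⁻¹ * (g * τ * g⁻¹) * g := by group
          rw [h3, this]; group
        exact S.clem c hc1 hc2 hττc
      · -- y ≠ w
        set q : Equiv.Perm ℕ := τc * τ with hqdef
        have hqD : IsD σ τ q := S.dmul htcD S.isdtau
        have htcy : τc y = w := by
          have := Equiv.ext_iff.mp htcinv w
          simp only [Equiv.Perm.mul_apply, Equiv.Perm.one_apply] at this
          rw [htcw] at this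
          exact this
        have hqw : q w = w := by
          have h1 : q w = τc (τ w) := rfl
          rw [h1, ← hydef, htcy]
        have hqy : q y = y := by
          have h1 : q y = τc (τ y) := rfl
          rw [h1, hydef, S.ht2, htcw]
        have hq1 : q = 1 := S.s1 hqD w y hw1 (by omega) hy.1 (by omega) (Ne.symm hyw) hqw hqy
        have hττc : τ = τc := by
          have h3 : τc = q * τ := by rw [hqdef, mul_assoc, S.ht2', mul_one]
          rw [hq1, one_mul] at h3
          exact h3.symm
        exact S.clem c hc1 hc2 hττc

lemma dinj (x y : ℕ) (hx1 : 1 ≤ x) (hx2 : x ≤ m - 1) (hy1 : 1 ≤ y) (hy2 : y ≤ m - 1)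
    (hd : ((τ x : ℕ) : ZMod m) - (x : ZMod m) = ((τ y : ℕ) : ZMod m) - (y : ZMod m)) :
    x = y := by
  haveI := S.nz
  have hm0 : 0 < m := by have := S.m14; omega
  by_contra hne
  have hxyne : (x : ZMod m) ≠ (y : ZMod m) := fun hh =>
    hne (S.inj x y hx1 (by omega) hy1 (by omega) hh)
  set z : ZMod m := (y : ZMod m) - (x : ZMod m) with hzdef
  have hzne : z ≠ 0 := sub_ne_zero.mpr (Ne.symm hxyne)
  set c : ℕ := z.val with hcdef
  have hc1 : 1 ≤ c := by
    rcases Nat.eq_zero_or_pos c with h0 | h1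
    · exact absurd ((ZMod.val_eq_zero z).mp h0) hzne
    · exact h1
  have hc2 : c ≤ m - 1 := by have := ZMod.val_lt z; omega
  have hcz : ((c : ℕ) : ZMod m) = z := ZMod.natCast_zmod_val z
  apply S.l1 c x hc1 hc2 hx1 (by omega)
  have hp1 := S.spow c x hx1 (by omega)
  have hsx : (σ ^ c) x = y := by
    refine S.inj _ _ hp1.1 hp1.2.1 hy1 (by omega) ?_
    rw [hp1.2.2, hcz, hzdef]
    ring
  have htx := S.hti x hx1 hx2
  have hty := S.hti y hy1 hy2
  have hp2 := S.spow c (τ x) htx.1 (by omega)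
  have hstx : (σ ^ c) (τ x) = τ y := by
    refine S.inj _ _ hp2.1 hp2.2.1 hty.1 (by omega) ?_
    rw [hp2.2.2, hcz, hzdef]
    linear_combination hd
  rw [hsx, hstx]

lemma dnh (x : ℕ) (hx1 : 1 ≤ x) (hx2 : x ≤ m - 1) :
    ((τ x : ℕ) : ZMod m) - (x : ZMod m) ≠ ((h : ℕ) : ZMod m) := by
  haveI := S.nz
  intro hcon
  have htx := S.hti x hx1 hx2
  have hhh : ((h : ℕ) : ZMod m) + ((h : ℕ) : ZMod m) = 0 := by
    rw [← Nat.cast_add]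
    have hhm : h + h = m := by have := S.hmh; omega
    rw [hhm, ZMod.natCast_self]
  have hd2 : ((τ (τ x) : ℕ) : ZMod m) - ((τ x : ℕ) : ZMod m)
      = ((τ x : ℕ) : ZMod m) - (x : ZMod m) := by
    rw [S.ht2 x]
    linear_combination -2 * hcon - hhh
  have heq := S.dinj (τ x) x htx.1 htx.2 hx1 hx2 hd2
  rw [heq, sub_self] at hcon
  have hdvd : m ∣ h := by
    rw [eq_comm, ZMod.natCast_eq_zero_iff] at hcon
    exact hcon
  have := Nat.le_of_dvd (by have := S.hh7; omega) hdvd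
  have := S.hmh
  have := S.hh7
  omega

lemma dsur (s : ZMod m) (hs : s ≠ ((h : ℕ) : ZMod m)) :
    ∃ x : ℕ, 1 ≤ x ∧ x ≤ m - 1 ∧ ((τ x : ℕ) : ZMod m) - (x : ZMod m) = s := by
  haveI := S.nz
  classical
  set f : ℕ → ZMod m := fun x => ((τ x : ℕ) : ZMod m) - (x : ZMod m) with hf
  have hinj : Set.InjOn f ↑(Finset.Icc 1 (m - 1)) := by
    intro a ha b hb hab
    simp only [Finset.coe_Icc, Set.mem_Icc] at ha hb
    exact S.dinj a b ha.1 ha.2 hb.1 hb.2 hab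
  have hm0 : 0 < m := by have := S.m14; omega
  have hcard : ((Finset.Icc 1 (m - 1)).image f).card = m - 1 := by
    rw [Finset.card_image_of_injOn hinj, Nat.card_Icc]
    omega
  have hsub : (Finset.Icc 1 (m - 1)).image f ⊆ Finset.univ.erase ((h : ℕ) : ZMod m) := by
    intro z hz
    rw [Finset.mem_image] at hz
    obtain ⟨a, ha, rfl⟩ := hz
    rw [Finset.mem_Icc] at ha
    exact Finset.mem_erase.mpr ⟨S.dnh a ha.1 ha.2, Finset.mem_univ _⟩
  have hcard2 : (Finset.univ.erase ((h : ℕ) : ZMod m)).card = m - 1 := by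
    rw [Finset.card_erase_of_mem (Finset.mem_univ _), Finset.card_univ, ZMod.card]
  have heq : (Finset.Icc 1 (m - 1)).image f = Finset.univ.erase ((h : ℕ) : ZMod m) :=
    Finset.eq_of_subset_of_card_le hsub (by omega)
  have hmem : s ∈ (Finset.Icc 1 (m - 1)).image f := by
    rw [heq]
    exact Finset.mem_erase.mpr ⟨hs, Finset.mem_univ _⟩
  rw [Finset.mem_image] at hmem
  obtain ⟨x, hx, hxs⟩ := hmem
  rw [Finset.mem_Icc] at hx
  exact ⟨x, hx.1, hx.2, hxs⟩

lemma formeq {u v u' v' : ℕ} (hu : (u : ZMod m) = (u' : ZMod m))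
    (hv : (v : ZMod m) = (v' : ZMod m)) :
    σ ^ u * τ * σ ^ v = σ ^ u' * τ * σ ^ v' := by
  rw [S.modp hu, S.modp hv]

lemma rpt {u v u' v' : ℕ}
    (hsum : (u : ZMod m) + (v : ZMod m) = ((h : ℕ) : ZMod m))
    (hsum' : (u' : ZMod m) + (v' : ZMod m) = ((h : ℕ) : ZMod m))
    (x : ℕ) (hx1 : 1 ≤ x) (hx2 : x ≤ m + 1)
    (hagree : (σ ^ u * τ * σ ^ v) x = (σ ^ u' * τ * σ ^ v') x) :
    σ ^ u * τ * σ ^ v = σ ^ u' * τ * σ ^ v' := by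
  haveI := S.nz
  have hm0 : 0 < m := by have := S.m14; omega
  have main : (u : ZMod m) = (u' : ZMod m) ∧ (v : ZMod m) = (v' : ZMod m) := by
    rcases eq_or_lt_of_le hx2 with hx | hx
    · have h1 := S.tformn u v
      have h2 := S.tformn u' v'
      rw [hx] at hagree
      have huu : (u : ZMod m) = (u' : ZMod m) := by
        rw [← h1.2.2, ← h2.2.2, hagree]
      exact ⟨huu, by linear_combination hsum - hsum' - huu⟩
    · have hxm : x ≤ m := by omega
      have hzp := S.spow v x hx1 hxm
      have hzp' := S.spow v' x hx1 hxm
      have happ : (σ ^ u * τ * σ ^ v) x = (σ ^ u) (τ ((σ ^ v) x)) := rfl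
      have happ' : (σ ^ u' * τ * σ ^ v') x = (σ ^ u') (τ ((σ ^ v') x)) := rfl
      rcases eq_or_lt_of_le hzp.2.1 with hzm | hzm
      · -- (σ^v) x = m
        have hL : (σ ^ u * τ * σ ^ v) x = m + 1 := by
          rw [happ, hzm, S.tm, S.spfix u _ (Or.inr le_rfl)]
        have hz'm : (σ ^ v') x = m := by
          by_contra hz'
          have hz'2 : (σ ^ v') x ≤ m - 1 := by omega
          have ht' := S.hti _ hzp'.1 hz'2
          have hp := S.spow u' (τ ((σ ^ v') x)) ht'.1 (by omega)
          rw [hL, happ'] at hagree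
          omega
        have hvv : (v : ZMod m) = (v' : ZMod m) := by
          have e1 := hzp.2.2
          have e2 := hzp'.2.2
          rw [hzm] at e1
          rw [hz'm] at e2
          linear_combination e2 - e1
        exact ⟨by linear_combination hsum - hsum' - hvv, hvv⟩
      · -- (σ^v) x ≤ m - 1
        have hzb : (σ ^ v) x ≤ m - 1 := by omega
        rcases eq_or_lt_of_le hzp'.2.1 with hz'm | hz'm
        · exfalso
          have hR : (σ ^ u' * τ * σ ^ v') x = m + 1 := by
            rw [happ', hz'm, S.tm, S.spfix u' _ (Or.inr le_rfl)]
          have ht := S.hti _ hzp.1 hzb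
          have hp := S.spow u (τ ((σ ^ v) x)) ht.1 (by omega)
          rw [hR, happ] at hagree
          omega
        · have hz'b : (σ ^ v') x ≤ m - 1 := by omega
          have ht := S.hti _ hzp.1 hzb
          have ht' := S.hti _ hzp'.1 hz'b
          have hp := S.spow u (τ ((σ ^ v) x)) ht.1 (by omega)
          have hp' := S.spow u' (τ ((σ ^ v') x)) ht'.1 (by omega)
          have eV : ((τ ((σ ^ v) x) : ℕ) : ZMod m) + u
              = ((τ ((σ ^ v') x) : ℕ) : ZMod m) + u' := by
            rw [← hp.2.2, ← hp'.2.2, ← happ, ← happ', hagree]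
          have hdz : ((τ ((σ ^ v) x) : ℕ) : ZMod m) - (((σ ^ v) x : ℕ) : ZMod m)
              = ((τ ((σ ^ v') x) : ℕ) : ZMod m) - (((σ ^ v') x : ℕ) : ZMod m) := by
            have e1 := hzp.2.2
            have e2 := hzp'.2.2
            linear_combination eV - e1 + e2 - hsum + hsum'
          have hzz := S.dinj _ _ hzp.1 hzb hzp'.1 hz'b hdz
          have huu : (u : ZMod m) = (u' : ZMod m) := by
            rw [hzz] at eV
            linear_combination eV
          exact ⟨huu, by linear_combination hsum - hsum' - huu⟩
  exact S.formeq main.1 main.2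

lemma rep (z : ZMod m) : ∃ x : ℕ, 1 ≤ x ∧ x ≤ m ∧ ((x : ℕ) : ZMod m) = z := by
  haveI := S.nz
  by_cases h0 : z = 0
  · exact ⟨m, by have := S.m14; omega, le_rfl, by rw [h0, ZMod.natCast_self]⟩
  · refine ⟨z.val, ?_, ?_, ZMod.natCast_zmod_val z⟩
    · rcases Nat.eq_zero_or_pos z.val with hv | hv
      · exact absurd ((ZMod.val_eq_zero z).mp hv) h0
      · exact hv
    · exact le_of_lt (ZMod.val_lt z)

lemma hhh : ((h : ℕ) : ZMod m) + ((h : ℕ) : ZMod m) = 0 := by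
  rw [← Nat.cast_add]
  have hhm : h + h = m := by have := S.hmh; omega
  rw [hhm, ZMod.natCast_self]

lemma formk {u v : ℕ} (hsum : (u : ZMod m) + (v : ZMod m) = ((h : ℕ) : ZMod m)) :
    σ ^ u * τ * σ ^ v ∈ Set.range (kap m h σ τ) := by
  haveI := S.nz
  refine ⟨(u : ZMod m), ?_⟩
  unfold kap
  have e1 : ((((u : ZMod m)).val : ℕ) : ZMod m) = (u : ZMod m) := ZMod.natCast_zmod_val _
  have e2 : (((((h : ℕ) : ZMod m) - (u : ZMod m)).val : ℕ) : ZMod m) = (v : ZMod m) := by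
    rw [ZMod.natCast_zmod_val]
    linear_combination -hsum
  exact S.formeq e1 e2

lemma invform {p q : ℕ} (hp : p ≤ m) (hq : q ≤ m) :
    (σ ^ p * τ * σ ^ q)⁻¹ = σ ^ (m - q) * τ * σ ^ (m - p) := by
  refine inv_eq_of_mul_eq_one_right ?_
  rw [S.rearr]
  have h1 : σ ^ q * σ ^ (m - q) = 1 := by
    rw [← pow_add]
    have hq' : q + (m - q) = m := by omega
    rw [hq', S.sigm]
  rw [h1, mul_one, S.ht2', mul_one, ← pow_add]
  have hp' : p + (m - p) = m := by omega
  rw [hp', S.sigm]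

lemma kprod (a b : ZMod m) :
    kap m h σ τ a * kap m h σ τ b ∈ insert 1 (Set.range (kap m h σ τ)) := by
  haveI := S.nz
  have hm0 : 0 < m := by have := S.m14; omega
  set p₁ := a.val with hp₁
  set q₁ := (((h : ℕ) : ZMod m) - a).val with hq₁
  set p₂ := b.val with hp₂
  set q₂ := (((h : ℕ) : ZMod m) - b).val with hq₂
  have hc1 : ((p₁ : ℕ) : ZMod m) = a := ZMod.natCast_zmod_val a
  have hcq1 : ((q₁ : ℕ) : ZMod m) = ((h : ℕ) : ZMod m) - a := ZMod.natCast_zmod_val _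
  have hc2 : ((p₂ : ℕ) : ZMod m) = b := ZMod.natCast_zmod_val b
  have hcq2 : ((q₂ : ℕ) : ZMod m) = ((h : ℕ) : ZMod m) - b := ZMod.natCast_zmod_val _
  have hhh := S.hhh
  set e := (q₁ + p₂) % m with hedef
  have hee : ((q₁ + p₂ : ℕ) : ZMod m) = ((e : ℕ) : ZMod m) := (ZMod.natCast_mod _ _).symm
  have hbc : σ ^ (q₁ + p₂) = σ ^ e := S.modp hee
  have hkap : kap m h σ τ a * kap m h σ τ b
      = σ ^ p₁ * (τ * (σ ^ q₁ * σ ^ p₂) * τ) * σ ^ q₂ := S.rearr _ _ _ _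
  rcases Nat.eq_zero_or_pos e with he0 | hep
  · have h1 : σ ^ q₁ * σ ^ p₂ = 1 := by rw [← pow_add, hbc, he0, pow_zero]
    have hP : kap m h σ τ a * kap m h σ τ b = σ ^ (p₁ + q₂) := by
      rw [hkap, h1, mul_one, S.ht2', mul_one, ← pow_add]
    have he0' : ((q₁ + p₂ : ℕ) : ZMod m) = 0 := by
      rw [hee, he0]
      simp
    have hz : ((p₁ + q₂ : ℕ) : ZMod m) = ((0 : ℕ) : ZMod m) := by
      have he0'' : (((h : ℕ) : ZMod m) - a) + b = 0 := by
        rw [← hcq1, ← hc2, ← Nat.cast_add, hee, he0]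
        simp
      push_cast
      rw [hc1, hcq2]
      linear_combination -he0'' + hhh
    have hP1 : kap m h σ τ a * kap m h σ τ b = 1 := by
      rw [hP, S.modp hz, pow_zero]
    rw [hP1]
    exact Set.mem_insert _ _
  · have hle : e ≤ m - 1 := by have := Nat.mod_lt (q₁ + p₂) hm0; omega
    obtain ⟨A, B, hAB⟩ := S.hc e hep hle
    have h1 : τ * (σ ^ q₁ * σ ^ p₂) * τ = σ ^ A * τ * σ ^ B := by
      rw [← pow_add, hbc, ← hAB]
    have hP : kap m h σ τ a * kap m h σ τ b = σ ^ (p₁ + A) * τ * σ ^ (B + q₂) := by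
      rw [hkap, h1, pow_add, pow_add]
      group
    set U := p₁ + A with hU
    set V := B + q₂ with hV
    by_cases hs : (U : ZMod m) + (V : ZMod m) = ((h : ℕ) : ZMod m)
    · rw [hP]
      exact Set.mem_insert_iff.mpr (Or.inr (S.formk hs))
    · exfalso
      have hsne : -((U : ZMod m) + (V : ZMod m)) ≠ ((h : ℕ) : ZMod m) := by
        intro hcon
        apply hs
        linear_combination -hcon - hhh
      obtain ⟨w, hw1, hw2, hwd⟩ := S.dsur (-((U : ZMod m) + (V : ZMod m))) hsne
      obtain ⟨x, hx1, hx2, hxz⟩ := S.rep ((w : ZMod m) - (V : ZMod m))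
      have htw := S.hti w hw1 hw2
      have hfix : (σ ^ U * τ * σ ^ V) x = x := by
        have happ : (σ ^ U * τ * σ ^ V) x = (σ ^ U) (τ ((σ ^ V) x)) := rfl
        have hpv := S.spow V x hx1 hx2
        have hzw : (σ ^ V) x = w := by
          refine S.inj _ _ hpv.1 hpv.2.1 hw1 (by omega) ?_
          rw [hpv.2.2, hxz]
          ring
        have hpu := S.spow U (τ w) htw.1 (by omega)
        have hux : (σ ^ U) (τ w) = x := by
          refine S.inj _ _ hpu.1 hpu.2.1 hx1 hx2 ?_
          rw [hpu.2.2, hxz]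
          linear_combination hwd
        rw [happ, hzw, hux]
      have hinv : (σ ^ p₁ * τ * σ ^ q₁)⁻¹ = σ ^ (m - q₁) * τ * σ ^ (m - p₁) :=
        S.invform (le_of_lt (ZMod.val_lt a)) (le_of_lt (ZMod.val_lt _))
      have hsum1 : ((m - q₁ : ℕ) : ZMod m) + ((m - p₁ : ℕ) : ZMod m) = ((h : ℕ) : ZMod m) := by
        rw [Nat.cast_sub (le_of_lt (ZMod.val_lt _)), Nat.cast_sub (le_of_lt (ZMod.val_lt a))]
        rw [ZMod.natCast_self, hc1, hcq1]
        linear_combination -hhh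
      have hsum2 : ((p₂ : ℕ) : ZMod m) + ((q₂ : ℕ) : ZMod m) = ((h : ℕ) : ZMod m) := by
        rw [hc2, hcq2]
        ring
      have h5 : (kap m h σ τ a * kap m h σ τ b) x = x := by rw [hP]; exact hfix
      have h6 : (kap m h σ τ b) x = (kap m h σ τ a)⁻¹ x := by
        have h5' := congrArg (⇑(kap m h σ τ a)⁻¹) h5
        simpa [Equiv.Perm.mul_apply, Equiv.Perm.inv_def, Equiv.symm_apply_apply] using h5'
      have h6' : (σ ^ p₂ * τ * σ ^ q₂) x = (σ ^ (m - q₁) * τ * σ ^ (m - p₁)) x := by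
        have e1 : kap m h σ τ b = σ ^ p₂ * τ * σ ^ q₂ := rfl
        have e2 : (kap m h σ τ a)⁻¹ = σ ^ (m - q₁) * τ * σ ^ (m - p₁) := by
          have : kap m h σ τ a = σ ^ p₁ * τ * σ ^ q₁ := rfl
          rw [this, hinv]
        rw [← e1, ← e2]
        exact h6
      have h7 : σ ^ p₂ * τ * σ ^ q₂ = σ ^ (m - q₁) * τ * σ ^ (m - p₁) :=
        S.rpt hsum2 hsum1 x hx1 (by omega) h6'
      have h8 : kap m h σ τ a * kap m h σ τ b = 1 := by
        have e2 : kap m h σ τ b = (kap m h σ τ a)⁻¹ := by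
          have e1 : kap m h σ τ b = σ ^ p₂ * τ * σ ^ q₂ := rfl
          have e3 : kap m h σ τ a = σ ^ p₁ * τ * σ ^ q₁ := rfl
          rw [e1, e3, hinv, h7]
        rw [e2]
        group
      have h9 : (σ ^ U * τ * σ ^ V) (m + 1) = m + 1 := by
        rw [← hP, h8]
        simp
      have := S.tformn U V
      omega

def Kgr (S : Setup m h σ τ) : Subgroup (Equiv.Perm ℕ) where
  carrier := insert 1 (Set.range (kap m h σ τ))
  one_mem' := Set.mem_insert _ _
  mul_mem' := by
    intro g₁ g₂ h₁ h₂
    rcases Set.mem_insert_iff.mp h₁ with rfl | ⟨a, rfl⟩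
    · simpa using h₂
    · rcases Set.mem_insert_iff.mp h₂ with rfl | ⟨b, rfl⟩
      · simpa using Set.mem_insert_iff.mpr (Or.inr ⟨a, rfl⟩)
      · exact S.kprod a b
  inv_mem' := by
    intro g hg
    rcases Set.mem_insert_iff.mp hg with rfl | ⟨a, rfl⟩
    · simpa using Set.mem_insert _ _
    · haveI := S.nz
      have hinv : (kap m h σ τ a)⁻¹
          = σ ^ (m - (((h : ℕ) : ZMod m) - a).val) * τ * σ ^ (m - a.val) := by
        have e3 : kap m h σ τ a = σ ^ a.val * τ * σ ^ (((h : ℕ) : ZMod m) - a).val := rfl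
        rw [e3, S.invform (le_of_lt (ZMod.val_lt a)) (le_of_lt (ZMod.val_lt _))]
      have hsum1 : ((m - (((h : ℕ) : ZMod m) - a).val : ℕ) : ZMod m)
          + ((m - a.val : ℕ) : ZMod m) = ((h : ℕ) : ZMod m) := by
        rw [Nat.cast_sub (le_of_lt (ZMod.val_lt _)), Nat.cast_sub (le_of_lt (ZMod.val_lt a))]
        rw [ZMod.natCast_self, ZMod.natCast_zmod_val, ZMod.natCast_zmod_val]
        linear_combination -S.hhh
      rw [hinv]
      exact Set.mem_insert_iff.mpr (Or.inr (S.formk hsum1))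

lemma memKgr {g : Equiv.Perm ℕ} : g ∈ S.Kgr ↔ g = 1 ∨ ∃ a, kap m h σ τ a = g := by
  constructor
  · intro hg
    rcases Set.mem_insert_iff.mp hg with h1 | ⟨a, ha⟩
    · exact Or.inl h1
    · exact Or.inr ⟨a, ha⟩
  · intro hg
    rcases hg with rfl | ⟨a, ha⟩
    · exact Set.mem_insert _ _
    · exact Set.mem_insert_iff.mpr (Or.inr ⟨a, ha⟩)

lemma korder (a : ZMod m) : orderOf (kap m h σ τ a) = orderOf (kap m h σ τ 0) := by
  haveI := S.nz
  have hval0 : ((0 : ZMod m)).val = 0 := ZMod.val_zero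
  have hconj : kap m h σ τ a = σ ^ a.val * kap m h σ τ 0 * (σ ^ a.val)⁻¹ := by
    have e0 : kap m h σ τ 0 = τ * σ ^ ((((h : ℕ) : ZMod m)) - 0).val := by
      show σ ^ ((0 : ZMod m)).val * τ * σ ^ _ = _
      rw [hval0, pow_zero, one_mul]
    have e1 : σ ^ ((((h : ℕ) : ZMod m)) - 0).val = σ ^ (((h : ℕ) : ZMod m) - a).val * σ ^ a.val := by
      rw [← pow_add]
      apply S.modp
      push_cast
      rw [ZMod.natCast_zmod_val, ZMod.natCast_zmod_val, ZMod.natCast_zmod_val]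
      ring
    rw [e0, e1]
    show σ ^ a.val * τ * σ ^ (((h : ℕ) : ZMod m) - a).val = _
    group
  rw [hconj]
  have hsc : SemiconjBy (σ ^ a.val) (kap m h σ τ 0)
      (σ ^ a.val * kap m h σ τ 0 * (σ ^ a.val)⁻¹) := by
    unfold SemiconjBy
    group
  exact (SemiconjBy.orderOf_eq _ hsc).symm

lemma mainlem : ∀ q : ℕ, q.Prime → q ∣ (m + 1) → q = orderOf (kap m h σ τ 0) := by
  haveI := S.nz
  classical
  intro q hq hdvd
  have hm0 : 0 < m := by have := S.m14; omega
  -- the evaluation map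
  have hval : ∀ g : Equiv.Perm ℕ, g ∈ S.Kgr → 1 ≤ g (m + 1) ∧ g (m + 1) ≤ m + 1 := by
    intro g hg
    rcases (S.memKgr).mp hg with rfl | ⟨a, rfl⟩
    · simp
    · have hb := S.tformn a.val (((h : ℕ) : ZMod m) - a).val
      have e1 : kap m h σ τ a (m+1)
          = (σ ^ a.val * τ * σ ^ (((h : ℕ) : ZMod m) - a).val) (m+1) := rfl
      rw [e1]
      exact ⟨hb.1, by omega⟩
  set F : ↥S.Kgr → Fin (m + 1) := fun g =>
    ⟨(g : Equiv.Perm ℕ) (m + 1) - 1, by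
      have := hval _ g.2
      omega⟩ with hF
  have hFval : ∀ a : ZMod m, ∀ hmem : kap m h σ τ a ∈ S.Kgr,
      ((kap m h σ τ a (m + 1) : ℕ) : ZMod m) = a := by
    intro a _
    have := S.tformn a.val (((h : ℕ) : ZMod m) - a).val
    have e1 : kap m h σ τ a (m+1) = (σ ^ a.val * τ * σ ^ (((h : ℕ) : ZMod m) - a).val) (m+1) := rfl
    rw [e1, this.2.2, ZMod.natCast_zmod_val]
  have hFinj : Function.Injective F := by
    intro g₁ g₂ hFeq
    have hv1 := hval _ g₁.2
    have hv2 := hval _ g₂.2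
    have heq : (g₁ : Equiv.Perm ℕ) (m + 1) = (g₂ : Equiv.Perm ℕ) (m + 1) := by
      have hvv := congrArg Fin.val hFeq
      simp only [hF] at hvv
      omega
    rcases (S.memKgr).mp g₁.2 with h1 | ⟨a, ha⟩ <;>
      rcases (S.memKgr).mp g₂.2 with h2 | ⟨b, hb⟩
    · exact Subtype.ext (by rw [h1, h2])
    · exfalso
      have hb' := S.tformn b.val (((h : ℕ) : ZMod m) - b).val
      rw [h1] at heq
      simp only [Equiv.Perm.one_apply] at heq
      have e1 : kap m h σ τ b (m+1)
          = (σ ^ b.val * τ * σ ^ (((h : ℕ) : ZMod m) - b).val) (m+1) := rfl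
      rw [← hb, e1] at heq
      omega
    · exfalso
      have ha' := S.tformn a.val (((h : ℕ) : ZMod m) - a).val
      rw [h2] at heq
      simp only [Equiv.Perm.one_apply] at heq
      have e1 : kap m h σ τ a (m+1)
          = (σ ^ a.val * τ * σ ^ (((h : ℕ) : ZMod m) - a).val) (m+1) := rfl
      rw [← ha, e1] at heq
      omega
    · have hab : a = b := by
        have e1 := hFval a (by rw [ha]; exact g₁.2)
        have e2 := hFval b (by rw [hb]; exact g₂.2)
        rw [← e1, ← e2, ha, hb, heq]
      refine Subtype.ext ?_
      rw [← ha, ← hb, hab]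
  have hFsurj : Function.Surjective F := by
    intro j
    rcases Nat.lt_or_ge j.val m with hj | hj
    · set v : ℕ := j.val + 1 with hv
      set a : ZMod m := ((v : ℕ) : ZMod m) with ha
      have hmem : kap m h σ τ a ∈ S.Kgr := (S.memKgr).mpr (Or.inr ⟨a, rfl⟩)
      refine ⟨⟨kap m h σ τ a, hmem⟩, ?_⟩
      have hbnd := S.tformn a.val (((h : ℕ) : ZMod m) - a).val
      have e1 : kap m h σ τ a (m+1)
          = (σ ^ a.val * τ * σ ^ (((h : ℕ) : ZMod m) - a).val) (m+1) := rfl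
      have hcast := hFval a hmem
      have hvv : kap m h σ τ a (m + 1) = v := by
        refine S.inj _ _ (by rw [e1]; exact hbnd.1) (by rw [e1]; exact hbnd.2.1)
          (by omega) (by omega) ?_
        rw [hcast, ha]
      apply Fin.ext
      simp only [hF]
      rw [hvv]
      omega
    · refine ⟨⟨1, (S.memKgr).mpr (Or.inl rfl)⟩, ?_⟩
      apply Fin.ext
      simp only [hF, Equiv.Perm.one_apply]
      have := j.isLt
      omega
  haveI : Finite ↥S.Kgr := Finite.of_injective F hFinj
  have hcard : Nat.card ↥S.Kgr = m + 1 := by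
    rw [Nat.card_congr (Equiv.ofBijective F ⟨hFinj, hFsurj⟩), Nat.card_eq_fintype_card,
      Fintype.card_fin]
  haveI : Fact q.Prime := ⟨hq⟩
  obtain ⟨g, hg⟩ := exists_prime_orderOf_dvd_card' q (by rw [hcard]; exact hdvd)
  have hgord : orderOf (g : Equiv.Perm ℕ) = q := by
    rw [← hg]
    exact orderOf_injective S.Kgr.subtype S.Kgr.subtype_injective g
  rcases (S.memKgr).mp g.2 with h1 | ⟨a, ha⟩
  · exfalso
    rw [h1] at hgord
    simp only [orderOf_one] at hgord
    exact hq.one_lt.ne hgord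
  · rw [← hgord, ← ha, S.korder a]

end Setup

lemma pow3mod24 : ∀ n : ℕ, 0 < n → (∀ q : ℕ, Nat.Prime q → q ∣ n → q = 3) →
    n % 24 = 1 ∨ n % 24 = 3 ∨ n % 24 = 9 := by
  intro n
  induction n using Nat.strong_induction_on with
  | _ n ih =>
    intro hn hq
    rcases eq_or_ne n 1 with h1 | h1
    · left; omega
    · obtain ⟨p, hpp, hpd⟩ := Nat.exists_prime_and_dvd h1
      have hp3 : p = 3 := hq p hpp hpd
      subst hp3
      obtain ⟨k, hk⟩ := hpd
      have hk0 : 0 < k := by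
        rcases Nat.eq_zero_or_pos k with h0 | h0
        · omega
        · exact h0
      have hkq : ∀ q : ℕ, Nat.Prime q → q ∣ k → q = 3 := by
        intro q hqp hqd
        exact hq q hqp (hk ▸ Dvd.dvd.mul_left hqd 3)
      have hklt : k < n := by omega
      have := ih k hklt hk0 hkq
      omega

end NoCAux



/-- If `n ≡ 15 (mod 24)` or `n ≡ 21 (mod 24)`, then no permutation `τ ∈ S_n` satisfies
condition (C); hence the incidence graph of `K_n` is not a G-graph for such `n`. -/
theorem no_conditionC_of_fifteen_or_twentyone_mod_24 (n : ℕ)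
    (hmod : n % 24 = 15 ∨ n % 24 = 21)
    (σ ρ : Equiv.Perm ℕ)
    (hσ : ∀ k, σ k = sigmaFun n k) (hρ : ∀ k, ρ k = rhoFun n k) :
    ∀ τ : Equiv.Perm ℕ, ¬ ConditionC n σ ρ τ := by
  intro τ hC
  obtain ⟨hord, hτn, hfix, hrel⟩ := hC
  have hn15 : 15 ≤ n := by omega
  have hodd : n % 2 = 1 := by omega
  set m : ℕ := n - 1 with hm
  set h : ℕ := (n - 1) / 2 with hh
  have hmh : m = 2 * h := by omega
  have hh7 : 7 ≤ h := by omega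
  have hmn : m + 1 = n := by omega
  have ht2 : ∀ x : ℕ, τ (τ x) = x := by
    intro x
    have h2 : τ ^ 2 = 1 := by rw [← hord]; exact pow_orderOf_eq_one τ
    rw [pow_two] at h2
    have h3 := Equiv.ext_iff.mp h2 x
    simpa [Equiv.Perm.mul_apply] using h3
  have htn' : τ (m + 1) = m := by rw [hmn, hτn]
  have hτ0 : τ 0 = 0 := hfix 0 (Or.inl rfl)
  have htm : τ m = m + 1 := by
    have h4 := ht2 (m + 1)
    rw [htn'] at h4
    exact h4
  have hti : ∀ x, 1 ≤ x → x ≤ m - 1 → 1 ≤ τ x ∧ τ x ≤ m - 1 := by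
    intro x hx1 hx2
    constructor
    · by_contra h0
      have hτx0 : τ x = 0 := by omega
      have h4 := ht2 x
      rw [hτx0, hτ0] at h4
      omega
    · by_contra h0
      have hcases : τ x = m ∨ τ x = m + 1 ∨ m + 2 ≤ τ x := by omega
      rcases hcases with hcc | hcc | hcc
      · have h4 := ht2 x
        rw [hcc, htm] at h4
        omega
      · have h4 := ht2 x
        rw [hcc, htn'] at h4
        omega
      · have h4 := hfix (τ x) (Or.inr (by omega))
        have h5 := ht2 x
        rw [h4] at h5
        omega
  have hs : ∀ x, 1 ≤ x → x ≤ m → 1 ≤ σ x ∧ σ x ≤ m ∧ ((σ x : ℕ) : ZMod m) = (x : ZMod m) + 1 := by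
    intro x hx1 hx2
    rw [hσ x]
    unfold sigmaFun
    rcases eq_or_lt_of_le hx2 with hxm | hxm
    · have c1 : ¬ (1 ≤ x ∧ x ≤ n - 2) := by omega
      have c2 : x = n - 1 := by omega
      rw [if_neg c1, if_pos c2]
      refine ⟨le_rfl, by omega, ?_⟩
      rw [hxm]
      push_cast
      rw [ZMod.natCast_self]
      ring
    · have c1 : 1 ≤ x ∧ x ≤ n - 2 := by omega
      rw [if_pos c1]
      exact ⟨by omega, by omega, by push_cast; ring⟩
  have hsf : ∀ x : ℕ, x = 0 ∨ m + 1 ≤ x → σ x = x := by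
    intro x hx
    rw [hσ x]
    unfold sigmaFun
    have c1 : ¬ (1 ≤ x ∧ x ≤ n - 2) := by omega
    have c2 : ¬ (x = n - 1) := by omega
    rw [if_neg c1, if_neg c2]
  have hcnd : ∀ k, 1 ≤ k → k ≤ m - 1 → ∃ A B : ℕ, τ * σ ^ k * τ = σ ^ A * τ * σ ^ B := by
    intro k hk1 hk2
    exact ⟨τ k, τ (ρ (τ k)), hrel k hk1 (by omega)⟩
  have S : NoCAux.Setup m h σ τ := ⟨hmh, hh7, hs, hsf, ht2, htn', hti, hcnd⟩
  have hmain := S.mainlem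
  have h3 : Nat.Prime 3 := Nat.prime_three
  have h3d : 3 ∣ m + 1 := by omega
  have hr3 : 3 = orderOf (NoCAux.kap m h σ τ 0) := hmain 3 h3 h3d
  have hall : ∀ q : ℕ, Nat.Prime q → q ∣ (m + 1) → q = 3 := by
    intro q hq hqd
    rw [hmain q hq hqd, ← hr3]
  have hfin := NoCAux.pow3mod24 (m + 1) (by omega) hall
  omega
end

section
/- Let n ≥ 3 and suppose τ ∈ S_n satisfies condition (C). Define π : {1,...,n−2} → ℤ/(n−1)ℤ by π(k) = k − τ(k) (mod n−1). Then π is injective; moreover, if n is even the image of π is ℤ/(n−1)ℤ ∖ {0}, and if n is odd the image of π is ℤ/(n−1)ℤ ∖ {(n−1)/2}. -/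
def condCRep (M : ℕ) (z : ZMod (M + 2)) : ℕ := if z.val = 0 then M + 2 else z.val

namespace condCRep

lemma cast (M : ℕ) (z : ZMod (M + 2)) : ((condCRep M z : ℕ) : ZMod (M + 2)) = z := by
  unfold condCRep
  split
  · next h => rw [ZMod.natCast_self]; exact (((ZMod.val_eq_zero z).mp h)).symm
  · exact ZMod.natCast_rightInverse z

lemma pos (M : ℕ) (z : ZMod (M + 2)) : 1 ≤ condCRep M z := by
  unfold condCRep; split <;> omega

lemma le (M : ℕ) (z : ZMod (M + 2)) : condCRep M z ≤ M + 2 := by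
  have := ZMod.val_lt z
  unfold condCRep; split <;> omega

lemma le_of_ne (M : ℕ) (z : ZMod (M + 2)) (hz : z ≠ 0) : condCRep M z ≤ M + 1 := by
  have h1 := ZMod.val_lt z
  have h2 : z.val ≠ 0 := fun h => hz ((ZMod.val_eq_zero z).mp h)
  unfold condCRep; split <;> omega

lemma zero (M : ℕ) : condCRep M 0 = M + 2 := by
  unfold condCRep; rw [if_pos ZMod.val_zero]

lemma natCast (M : ℕ) {k : ℕ} (h1 : 1 ≤ k) (h2 : k ≤ M + 2) :
    condCRep M ((k : ℕ) : ZMod (M + 2)) = k := by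
  unfold condCRep
  rcases Nat.lt_or_ge k (M + 2) with h | h
  · rw [ZMod.val_cast_of_lt h, if_neg (by omega)]
  · have hk : k = M + 2 := by omega
    subst hk
    rw [ZMod.natCast_self, ZMod.val_zero, if_pos rfl]

end condCRep

theorem condC_key (M : ℕ) (σ ρ τ : Equiv.Perm ℕ)
    (hσ : ∀ k, σ k = sigmaFun (M + 3) k) (hρ : ∀ k, ρ k = rhoFun (M + 3) k)
    (hC : ConditionC (M + 3) σ ρ τ) :
    Set.InjOn (fun k : ℕ => (k : ZMod (M + 2)) - ((τ k : ℕ) : ZMod (M + 2)))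
        (Set.Icc 1 (M + 1)) ∧
    (Even (M + 3) →
      (fun k : ℕ => (k : ZMod (M + 2)) - ((τ k : ℕ) : ZMod (M + 2))) '' Set.Icc 1 (M + 1)
        = Set.univ \ {(0 : ZMod (M + 2))}) ∧
    (Odd (M + 3) →
      (fun k : ℕ => (k : ZMod (M + 2)) - ((τ k : ℕ) : ZMod (M + 2))) '' Set.Icc 1 (M + 1)
        = Set.univ \ {(((M + 2) / 2 : ℕ) : ZMod (M + 2))}) := by
  haveI : Fact (1 < M + 2) := ⟨by omega⟩
  obtain ⟨hord, hτtop0, hfix, hrel⟩ := hC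
  have hτtop : τ (M + 3) = M + 2 := hτtop0
  -- τ is an involution pointwise
  have hττ : ∀ x, τ (τ x) = x := by
    have h2 : τ * τ = 1 := by
      have := pow_orderOf_eq_one τ
      rwa [hord, pow_two] at this
    intro x
    have hx : (τ * τ) x = (1 : Equiv.Perm ℕ) x := by rw [h2]
    simpa [Equiv.Perm.mul_apply] using hx
  have hτ0 : τ 0 = 0 := hfix 0 (Or.inl rfl)
  have hτN : τ (M + 2) = M + 3 := by
    have := hττ (M + 3); rwa [hτtop] at this
  have hτmem : ∀ k, 1 ≤ k → k ≤ M + 1 → 1 ≤ τ k ∧ τ k ≤ M + 1 := by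
    intro k h1 h2
    have hk0 : τ k ≠ 0 := by
      intro h0; have := hττ k; rw [h0, hτ0] at this; omega
    have hkN : τ k ≠ M + 2 := by
      intro h0; have := hττ k; rw [h0, hτN] at this; omega
    have hkT : τ k ≠ M + 3 := by
      intro h0; have := hττ k; rw [h0, hτtop] at this; omega
    have hkG : ¬ (M + 3 < τ k) := by
      intro h0
      have h1' := hfix (τ k) (Or.inr h0)
      have h2' := hττ k
      rw [h1'] at h2'
      omega
    omega
  -- sigma facts
  have hσtop : ∀ j : ℕ, (σ ^ j) (M + 3) = M + 3 := by
    have h1 : σ (M + 3) = M + 3 := by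
      rw [hσ]; unfold sigmaFun
      rw [if_neg (by omega), if_neg (by omega)]
    intro j
    induction j with
    | zero => simp
    | succ j ih => rw [pow_succ, Equiv.Perm.mul_apply, h1, ih]
  have hσrep : ∀ z : ZMod (M + 2), σ (condCRep M z) = condCRep M (z + 1) := by
    intro z
    have hvlt : z.val < M + 2 := ZMod.val_lt z
    rw [hσ]
    by_cases h0 : z.val = 0
    · have hz : z = 0 := (ZMod.val_eq_zero z).mp h0
      subst hz
      rw [condCRep.zero, zero_add]
      have hv1 : (1 : ZMod (M + 2)).val = 1 := ZMod.val_one _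
      unfold sigmaFun condCRep
      rw [if_neg (by omega), if_pos (by omega), hv1, if_neg (by omega)]
    · by_cases h1 : z.val = M + 1
      · have hz1 : (z + 1).val = 0 := by
          have hz : z + 1 = 0 := by
            have hzz : z = ((M + 1 : ℕ) : ZMod (M + 2)) := by
              rw [← h1]; exact (ZMod.natCast_rightInverse z).symm
            have hcalc : ((M + 1 : ℕ) : ZMod (M + 2)) + ((1 : ℕ) : ZMod (M + 2)) = 0 := by
              rw [← Nat.cast_add, show M + 1 + 1 = M + 2 from rfl, ZMod.natCast_self]
            rw [hzz]
            simpa using hcalc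
          rw [hz, ZMod.val_zero]
        unfold condCRep
        rw [if_neg h0, if_pos hz1, h1]
        unfold sigmaFun
        rw [if_pos (by omega)]
      · have hz1 : (z + 1).val = z.val + 1 := by
          rw [ZMod.val_add, ZMod.val_one]
          exact Nat.mod_eq_of_lt (by omega)
        unfold condCRep
        rw [if_neg h0, hz1, if_neg (by omega)]
        unfold sigmaFun
        rw [if_pos (by constructor <;> omega)]
  have hσpowrep : ∀ (j : ℕ) (z : ZMod (M + 2)),
      (σ ^ j) (condCRep M z) = condCRep M (z + j) := by
    intro j
    induction j with
    | zero => intro z; simp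
    | succ j ih =>
      intro z
      rw [pow_succ', Equiv.Perm.mul_apply, ih, hσrep]
      congr 1
      push_cast
      ring
  have hσpownat : ∀ (j k : ℕ), 1 ≤ k → k ≤ M + 2 →
      (σ ^ j) k = condCRep M ((k : ZMod (M + 2)) + j) := by
    intro j k h1 h2
    conv_lhs => rw [← condCRep.natCast M h1 h2]
    exact hσpowrep j _
  -- rho on the middle range
  have hρval : ∀ k, 1 ≤ k → k ≤ M + 1 → ρ k = M + 2 - k := by
    intro k h1 h2
    rw [hρ]; unfold rhoFun
    rw [if_pos (by constructor <;> omega)]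
    omega
  -- the relation, pointwise
  have hREL : ∀ k, 1 ≤ k → k ≤ M + 1 → ∀ x : ℕ,
      τ ((σ ^ k) (τ x)) = (σ ^ (τ k)) (τ ((σ ^ (τ (M + 2 - τ k))) x)) := by
    intro k h1 h2 x
    obtain ⟨ht1, ht2⟩ := hτmem k h1 h2
    have h := hrel k h1 (by omega)
    rw [hρval (τ k) ht1 ht2] at h
    have hx : (τ * σ ^ k * τ) x = (σ ^ (τ k) * τ * σ ^ (τ (M + 2 - τ k))) x := by rw [h]
    simpa [Equiv.Perm.mul_apply] using hx
  -- casting helpers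
  have hcast_inj : ∀ a b : ℕ, a ≤ M + 1 → b ≤ M + 1 →
      ((a : ZMod (M + 2)) = (b : ZMod (M + 2))) → a = b := by
    intro a b ha hb h
    have := congrArg ZMod.val h
    rwa [ZMod.val_cast_of_lt (by omega), ZMod.val_cast_of_lt (by omega)] at this
  have hcast_ne : ∀ k : ℕ, 1 ≤ k → k ≤ M + 1 → ((k : ZMod (M + 2)) ≠ 0) := by
    intro k h1 h2 h
    have := hcast_inj k 0 h2 (by omega) (by simpa using h)
    omega
  -- injectivity
  have hinj : ∀ a, 1 ≤ a → a ≤ M + 1 → ∀ b, 1 ≤ b → b ≤ M + 1 →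
      ((a : ZMod (M + 2)) - ((τ a : ℕ) : ZMod (M + 2))
        = (b : ZMod (M + 2)) - ((τ b : ℕ) : ZMod (M + 2))) → a = b := by
    intro a ha1 ha2 b hb1 hb2 hπ
    by_contra hab
    obtain ⟨hτa1, hτa2⟩ := hτmem a ha1 ha2
    obtain ⟨hτb1, hτb2⟩ := hτmem b hb1 hb2
    have hτa0 : ((τ a : ℕ) : ZMod (M + 2)) ≠ 0 := hcast_ne _ hτa1 hτa2
    set k₁ : ℕ := condCRep M (-((τ a : ℕ) : ZMod (M + 2))) with hk₁def
    have hk₁cast : ((k₁ : ℕ) : ZMod (M + 2)) = -((τ a : ℕ) : ZMod (M + 2)) :=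
      condCRep.cast M _
    have hk₁1 : 1 ≤ k₁ := condCRep.pos M _
    have hk₁2 : k₁ ≤ M + 1 := condCRep.le_of_ne M _ (neg_ne_zero.mpr hτa0)
    obtain ⟨hτk₁1, hτk₁2⟩ := hτmem k₁ hk₁1 hk₁2
    set m₁ : ℕ := τ (M + 2 - τ k₁) with hm₁def
    obtain ⟨hm₁1, hm₁2⟩ := hτmem (M + 2 - τ k₁) (by omega) (by omega)
    have hdne : ((b : ZMod (M + 2)) - (a : ZMod (M + 2))) ≠ 0 :=
      sub_ne_zero.mpr (fun h => hab (hcast_inj b a hb2 ha2 h).symm)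
    set dn : ℕ := condCRep M ((b : ZMod (M + 2)) - (a : ZMod (M + 2))) with hdndef
    have hdncast : ((dn : ℕ) : ZMod (M + 2)) = (b : ZMod (M + 2)) - (a : ZMod (M + 2)) :=
      condCRep.cast M _
    have hdn1 : 1 ≤ dn := condCRep.pos M _
    have hdn2 : dn ≤ M + 1 := condCRep.le_of_ne M _ hdne
    set x₀ : ℕ := τ dn with hx₀def
    obtain ⟨hx₀1, hx₀2⟩ := hτmem dn hdn1 hdn2
    have hτx₀ : τ x₀ = dn := hττ dn
    -- direct evaluation H1 : τ (σ^k₁ (τ a)) = M + 3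
    have H1 : τ ((σ ^ k₁) (τ a)) = M + 3 := by
      rw [hσpownat k₁ (τ a) hτa1 (by omega), hk₁cast, add_neg_cancel,
        condCRep.zero, hτN]
    -- direct evaluation H2 : τ (σ^k₁ (τ b)) = x₀
    have hπ' : ((τ b : ℕ) : ZMod (M + 2))
        = (b : ZMod (M + 2)) - (a : ZMod (M + 2)) + ((τ a : ℕ) : ZMod (M + 2)) := by
      linear_combination hπ
    have H2 : τ ((σ ^ k₁) (τ b)) = x₀ := by
      rw [hσpownat k₁ (τ b) hτb1 (by omega), hk₁cast, hπ']
      rw [show (b : ZMod (M + 2)) - (a : ZMod (M + 2)) + ((τ a : ℕ) : ZMod (M + 2))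
          + -((τ a : ℕ) : ZMod (M + 2)) = (b : ZMod (M + 2)) - (a : ZMod (M + 2)) by ring]
    -- relation evaluations
    have hRa := hREL k₁ hk₁1 hk₁2 a
    have hRb := hREL k₁ hk₁1 hk₁2 b
    rw [H1, hσpownat m₁ a ha1 (by omega)] at hRa
    rw [H2, hσpownat m₁ b hb1 (by omega)] at hRb
    by_cases hE0 : (a : ZMod (M + 2)) + (m₁ : ℕ) = 0
    · -- use hRb
      have hbm : (b : ZMod (M + 2)) + ((m₁ : ℕ) : ZMod (M + 2))
          = (b : ZMod (M + 2)) - (a : ZMod (M + 2)) := by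
        linear_combination hE0
      rw [hbm, ← hdndef, ← hx₀def,
        hσpownat (τ k₁) x₀ hx₀1 (by omega)] at hRb
      have hcc := congrArg (fun t : ℕ => ((t : ℕ) : ZMod (M + 2))) hRb
      simp only [condCRep.cast] at hcc
      have h0 : ((τ k₁ : ℕ) : ZMod (M + 2)) = 0 := by linear_combination -hcc
      exact hcast_ne _ hτk₁1 hτk₁2 h0
    · -- use hRa
      have hr1 : 1 ≤ condCRep M ((a : ZMod (M + 2)) + (m₁ : ℕ)) := condCRep.pos M _
      have hr2 : condCRep M ((a : ZMod (M + 2)) + (m₁ : ℕ)) ≤ M + 1 :=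
        condCRep.le_of_ne M _ hE0
      obtain ⟨hw1, hw2⟩ := hτmem _ hr1 hr2
      rw [hσpownat (τ k₁) _ hw1 (by omega)] at hRa
      have := condCRep.le M ((τ (condCRep M ((a : ZMod (M + 2)) + (m₁ : ℕ))) : ℕ)
        + (τ k₁ : ℕ) : ZMod (M + 2))
      omega
  -- the map
  set F : ℕ → ZMod (M + 2) := fun k => (k : ZMod (M + 2)) - ((τ k : ℕ) : ZMod (M + 2)) with hF
  have hInjOn : Set.InjOn F (Set.Icc 1 (M + 1)) := by
    intro a ha b hb h
    obtain ⟨ha1, ha2⟩ := Set.mem_Icc.mp ha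
    obtain ⟨hb1, hb2⟩ := Set.mem_Icc.mp hb
    exact hinj a ha1 ha2 b hb1 hb2 h
  have hFτ : ∀ k, 1 ≤ k → k ≤ M + 1 → F (τ k) = -F k := by
    intro k h1 h2
    show ((τ k : ℕ) : ZMod (M + 2)) - ((τ (τ k) : ℕ) : ZMod (M + 2))
      = -((k : ZMod (M + 2)) - ((τ k : ℕ) : ZMod (M + 2)))
    rw [hττ k]; ring
  have hsymm : ∀ x ∈ F '' Set.Icc 1 (M + 1), -x ∈ F '' Set.Icc 1 (M + 1) := by
    rintro x ⟨k, hk, rfl⟩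
    obtain ⟨h1, h2⟩ := Set.mem_Icc.mp hk
    obtain ⟨h1', h2'⟩ := hτmem k h1 h2
    exact ⟨τ k, Set.mem_Icc.mpr ⟨h1', h2'⟩, by rw [hFτ k h1 h2]⟩
  have hcardT : (F '' Set.Icc 1 (M + 1)).ncard = M + 1 := by
    rw [Set.ncard_image_of_injOn hInjOn, ← Finset.coe_Icc, Set.ncard_coe_finset,
      Nat.card_Icc]
    omega
  have hcompl : ((F '' Set.Icc 1 (M + 1))ᶜ).ncard = 1 := by
    have h := Set.ncard_add_ncard_compl (F '' Set.Icc 1 (M + 1))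
    rw [hcardT, Nat.card_eq_fintype_card, ZMod.card] at h
    omega
  obtain ⟨c₀, hc₀⟩ := Set.ncard_eq_one.mp hcompl
  have hc₀not : c₀ ∉ F '' Set.Icc 1 (M + 1) := by
    have h : c₀ ∈ (F '' Set.Icc 1 (M + 1))ᶜ := by rw [hc₀]; exact rfl
    exact h
  have hnotmem_eq : ∀ x : ZMod (M + 2), x ∉ F '' Set.Icc 1 (M + 1) → x = c₀ := by
    intro x hx
    have h : x ∈ (F '' Set.Icc 1 (M + 1))ᶜ := hx
    rw [hc₀] at h
    exact h
  have hneg : -c₀ = c₀ := by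
    by_cases h : -c₀ ∈ F '' Set.Icc 1 (M + 1)
    · exact absurd (by simpa using hsymm _ h) hc₀not
    · exact hnotmem_eq _ h
  have himg : F '' Set.Icc 1 (M + 1) = Set.univ \ {c₀} := by
    rw [← Set.compl_eq_univ_diff, ← hc₀, compl_compl]
  refine ⟨hInjOn, ?_, ?_⟩
  · -- Even case
    intro heven
    obtain ⟨t, ht⟩ := heven
    have h2c : c₀ + c₀ = 0 := by nth_rewrite 1 [← hneg]; ring
    have hv : c₀ = ((c₀.val : ℕ) : ZMod (M + 2)) := (ZMod.natCast_rightInverse c₀).symm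
    have hvlt : c₀.val < M + 2 := ZMod.val_lt c₀
    have hdd : (((c₀.val + c₀.val : ℕ)) : ZMod (M + 2)) = 0 := by
      push_cast
      rw [← hv]
      exact h2c
    rw [ZMod.natCast_eq_zero_iff] at hdd
    obtain ⟨u, hu⟩ := hdd
    have hu2 : u ≤ 1 := by
      by_contra h'
      have : 2 * (M + 2) ≤ (M + 2) * u := by nlinarith
      omega
    have hval0 : c₀.val = 0 := by interval_cases u <;> omega
    have hc0z : c₀ = 0 := by rw [hv, hval0]; exact Nat.cast_zero
    rw [himg, hc0z]
  · -- Odd case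
    intro hodd
    obtain ⟨t, ht⟩ := hodd
    set half : ℕ := (M + 2) / 2 with hhalf
    have hhalf2 : half + half = M + 2 := by omega
    have hhalf1 : 1 ≤ half := by omega
    have hhalfle : half ≤ M + 1 := by omega
    have hhalfne : ((half : ℕ) : ZMod (M + 2)) ≠ 0 := hcast_ne half hhalf1 hhalfle
    have hhalfadd : ((half : ℕ) : ZMod (M + 2)) + ((half : ℕ) : ZMod (M + 2)) = 0 := by
      rw [← Nat.cast_add, hhalf2, ZMod.natCast_self]
    have hhneg : -((half : ℕ) : ZMod (M + 2)) = ((half : ℕ) : ZMod (M + 2)) := by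
      linear_combination -hhalfadd
    have hnot : ((half : ℕ) : ZMod (M + 2)) ∉ F '' Set.Icc 1 (M + 1) := by
      rintro ⟨k, hk, hFk⟩
      obtain ⟨h1, h2⟩ := Set.mem_Icc.mp hk
      obtain ⟨h1', h2'⟩ := hτmem k h1 h2
      have hFτk : F (τ k) = ((half : ℕ) : ZMod (M + 2)) := by
        rw [hFτ k h1 h2, hFk, hhneg]
      have hkk : τ k = k :=
        hInjOn (Set.mem_Icc.mpr ⟨h1', h2'⟩) hk (by rw [hFτk, hFk])
      have hFk0 : F k = 0 := by
        show (k : ZMod (M + 2)) - ((τ k : ℕ) : ZMod (M + 2)) = 0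
        rw [hkk]; ring
      rw [hFk] at hFk0
      exact hhalfne hFk0
    have hch := hnotmem_eq _ hnot
    rw [himg, ← hch]

/-- If `n ≥ 3` and `τ ∈ S_n` satisfies condition (C), then the map
`π : {1,...,n-2} → ℤ/(n-1)ℤ`, `π(k) = k - τ(k) (mod n-1)`, is injective; its image is
`ℤ/(n-1)ℤ ∖ {0}` if `n` is even and `ℤ/(n-1)ℤ ∖ {(n-1)/2}` if `n` is odd. -/
theorem pi_injective_of_conditionC (n : ℕ) (hn : 3 ≤ n) (σ ρ τ : Equiv.Perm ℕ)
    (hσ : ∀ k, σ k = sigmaFun n k) (hρ : ∀ k, ρ k = rhoFun n k)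
    (hC : ConditionC n σ ρ τ) :
    Set.InjOn (fun k : ℕ => (k : ZMod (n - 1)) - ((τ k : ℕ) : ZMod (n - 1)))
        (Set.Icc 1 (n - 2)) ∧
    (Even n →
      (fun k : ℕ => (k : ZMod (n - 1)) - ((τ k : ℕ) : ZMod (n - 1))) '' Set.Icc 1 (n - 2)
        = Set.univ \ {(0 : ZMod (n - 1))}) ∧
    (Odd n →
      (fun k : ℕ => (k : ZMod (n - 1)) - ((τ k : ℕ) : ZMod (n - 1))) '' Set.Icc 1 (n - 2)
        = Set.univ \ {(((n - 1) / 2 : ℕ) : ZMod (n - 1))}) := by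
  obtain ⟨M, rfl⟩ : ∃ M, n = M + 3 := ⟨n - 3, by omega⟩
  exact condC_key M σ ρ τ hσ hρ hC
end

section
/- Identify {1,...,n−1} with ℤ/(n−1)ℤ (with n−1 corresponding to 0), keeping n as an extra fixed symbol. For a ∈ {1,...,n−1} coprime to n−1, let m_a ∈ S_n be the permutation that multiplies by a on ℤ/(n−1)ℤ and fixes n. If τ ∈ S_n satisfies condition (C), then the conjugate m_a τ m_a⁻¹ also satisfies condition (C). -/
/-- The permutation `m_a ∈ S_n`: identifying `{1,...,n-1}` with `ℤ/(n-1)ℤ` (with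
`n-1` corresponding to `0`), it multiplies by `a` and fixes `n` (and everything
outside `{1,...,n}`). -/
def maFun (n a k : ℕ) : ℕ :=
  if 1 ≤ k ∧ k ≤ n - 1 then
    (if (a * k) % (n - 1) = 0 then n - 1 else (a * k) % (n - 1))
  else k

theorem Equiv.Perm.inv_apply_self {α : Type*} (f : Equiv.Perm α) (x : α) : f⁻¹ (f x) = x :=
  f.symm_apply_apply x

namespace CondCAux


lemma eq_of_Icc_mod {m u v : ℕ} (hu1 : 1 ≤ u) (hu2 : u ≤ m) (hv1 : 1 ≤ v) (hv2 : v ≤ m)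
    (h : u % m = v % m) : u = v := by
  rcases eq_or_lt_of_le hu2 with h1 | h1 <;> rcases eq_or_lt_of_le hv2 with h2 | h2
  · omega
  · rw [h1, Nat.mod_self, Nat.mod_eq_of_lt h2] at h; omega
  · rw [h2, Nat.mod_self, Nat.mod_eq_of_lt h1] at h; omega
  · rw [Nat.mod_eq_of_lt h1, Nat.mod_eq_of_lt h2] at h; exact h

variable {n a : ℕ} {σ ρ μ : Equiv.Perm ℕ}

lemma sigma_apply (hn : 2 ≤ n) (hσ : ∀ k, σ k = sigmaFun n k) {x : ℕ}
    (h1 : 1 ≤ x) (h2 : x ≤ n - 1) : σ x = x % (n - 1) + 1 := by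
  rw [hσ, sigmaFun]
  split_ifs with hc hc2
  · rw [Nat.mod_eq_of_lt (by omega)]
  · simp [hc2, Nat.mod_self]
  · exfalso; omega

lemma sigma_fix (hn : 2 ≤ n) (hσ : ∀ k, σ k = sigmaFun n k) {x : ℕ}
    (h : x = 0 ∨ n - 1 < x) : σ x = x := by
  rw [hσ, sigmaFun]
  split_ifs with h1 h2 <;> omega

lemma sigma_pow_fix (hn : 2 ≤ n) (hσ : ∀ k, σ k = sigmaFun n k) {x : ℕ}
    (h : x = 0 ∨ n - 1 < x) (j : ℕ) : (σ ^ j) x = x := by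
  induction j with
  | zero => simp
  | succ j ih => rw [pow_succ, Equiv.Perm.mul_apply, sigma_fix hn hσ h, ih]

lemma sigma_pow_apply (hn : 2 ≤ n) (hσ : ∀ k, σ k = sigmaFun n k) (j : ℕ) {x : ℕ}
    (h1 : 1 ≤ x) (h2 : x ≤ n - 1) : (σ ^ j) x = (x + j - 1) % (n - 1) + 1 := by
  induction j with
  | zero =>
      simp only [pow_zero, Equiv.Perm.one_apply]
      rw [Nat.mod_eq_of_lt (by omega)]; omega
  | succ j ih =>
      have hm : 0 < n - 1 := by omega
      have hlt : (x + j - 1) % (n - 1) < n - 1 := Nat.mod_lt _ hm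
      rw [pow_succ', Equiv.Perm.mul_apply, ih,
        sigma_apply hn hσ (by omega) (by omega), Nat.mod_add_mod]
      congr 2
      omega

lemma sigma_pow_congr (hn : 2 ≤ n) (hσ : ∀ k, σ k = sigmaFun n k) {j j' : ℕ}
    (h : j % (n - 1) = j' % (n - 1)) : σ ^ j = σ ^ j' := by
  ext x
  by_cases hx : 1 ≤ x ∧ x ≤ n - 1
  · rw [sigma_pow_apply hn hσ j hx.1 hx.2, sigma_pow_apply hn hσ j' hx.1 hx.2,
      show x + j - 1 = (x - 1) + j by omega, show x + j' - 1 = (x - 1) + j' by omega,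
      Nat.add_mod (x - 1) j, Nat.add_mod (x - 1) j', h]
  · rw [sigma_pow_fix hn hσ (by omega) j, sigma_pow_fix hn hσ (by omega) j']

lemma mu_fix (hn : 2 ≤ n) (hμ : ∀ k, μ k = maFun n a k) {x : ℕ}
    (h : x = 0 ∨ n - 1 < x) : μ x = x := by
  rw [hμ, maFun]
  split_ifs with h1 h2 <;> omega

lemma mu_inv_fix (hn : 2 ≤ n) (hμ : ∀ k, μ k = maFun n a k) {x : ℕ}
    (h : x = 0 ∨ n - 1 < x) : μ⁻¹ x = x := by
  have hfix : μ x = x := mu_fix hn hμ h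
  calc μ⁻¹ x = μ⁻¹ (μ x) := by rw [hfix]
    _ = x := Equiv.Perm.inv_apply_self μ x

lemma mu_spec (hn : 2 ≤ n) (hμ : ∀ k, μ k = maFun n a k) {x : ℕ}
    (h1 : 1 ≤ x) (h2 : x ≤ n - 1) :
    1 ≤ μ x ∧ μ x ≤ n - 1 ∧ μ x % (n - 1) = (a * x) % (n - 1) := by
  rw [hμ, maFun, if_pos ⟨h1, h2⟩]
  split_ifs with h0
  · exact ⟨by omega, le_refl _, by rw [Nat.mod_self, h0]⟩
  · have hlt : (a * x) % (n - 1) < n - 1 := Nat.mod_lt _ (by omega)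
    exact ⟨by omega, by omega, by rw [Nat.mod_eq_of_lt hlt]⟩

lemma conj_sigma_pow (hn : 2 ≤ n) (hσ : ∀ k, σ k = sigmaFun n k)
    (hμ : ∀ k, μ k = maFun n a k) (j : ℕ) :
    μ * σ ^ j * μ⁻¹ = σ ^ (a * j) := by
  have key : μ⁻¹ * σ ^ (a * j) * μ = σ ^ j := by
    ext x
    simp only [Equiv.Perm.mul_apply]
    by_cases hx : 1 ≤ x ∧ x ≤ n - 1
    · obtain ⟨hm1, hm2, hm3⟩ := mu_spec hn hμ hx.1 hx.2
      rw [sigma_pow_apply hn hσ _ hm1 hm2]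
      set w := (μ x + a * j - 1) % (n - 1) + 1 with hw
      set z := (x + j - 1) % (n - 1) + 1 with hz
      have hmlt : (x + j - 1) % (n - 1) < n - 1 := Nat.mod_lt _ (by omega)
      have hwlt : (μ x + a * j - 1) % (n - 1) < n - 1 := Nat.mod_lt _ (by omega)
      obtain ⟨hz1, hz2, hz3⟩ := mu_spec hn hμ (show 1 ≤ z by omega) (show z ≤ n - 1 by omega)
      have hm3' : μ x ≡ a * x [MOD n - 1] := hm3
      have hz3' : μ z ≡ a * z [MOD n - 1] := hz3
      have hmodeq : μ z % (n - 1) = w % (n - 1) := by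
        have e1 : z ≡ x + j [MOD n - 1] := by
          calc z ≡ (x + j - 1) + 1 [MOD n - 1] := (Nat.mod_modEq _ _).add_right 1
            _ = x + j := by omega
        have e2 : μ z ≡ a * (x + j) [MOD n - 1] :=
          hz3'.trans (e1.mul_left a)
        have e3 : w ≡ a * (x + j) [MOD n - 1] := by
          calc w ≡ (μ x + a * j - 1) + 1 [MOD n - 1] := (Nat.mod_modEq _ _).add_right 1
            _ = μ x + a * j := by omega
            _ ≡ a * x + a * j [MOD n - 1] := hm3'.add_right (a * j)
            _ = a * (x + j) := (Nat.mul_add a x j).symm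
        exact e2.trans e3.symm
      have hμz : μ z = w :=
        eq_of_Icc_mod hz1 hz2 (by omega) (by omega) hmodeq
      rw [sigma_pow_apply hn hσ j hx.1 hx.2, ← hz, ← hμz, Equiv.Perm.inv_apply_self]
    · rw [mu_fix hn hμ (by omega), sigma_pow_fix hn hσ (by omega),
        mu_inv_fix hn hμ (by omega), sigma_pow_fix hn hσ (by omega)]
  calc μ * σ ^ j * μ⁻¹ = μ * (μ⁻¹ * σ ^ (a * j) * μ) * μ⁻¹ := by rw [key]
    _ = σ ^ (a * j) := by group

lemma rho_fix (hn : 2 ≤ n) (hρ : ∀ k, ρ k = rhoFun n k) {x : ℕ}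
    (h : x = 0 ∨ n < x) : ρ x = x := by
  rw [hρ, rhoFun]; split_ifs <;> omega

lemma rho_mid (hρ : ∀ k, ρ k = rhoFun n k) {x : ℕ}
    (h1 : 1 ≤ x) (h2 : x ≤ n - 2) : ρ x = n - 1 - x := by
  rw [hρ, rhoFun, if_pos ⟨h1, h2⟩]

lemma rho_nsub1 (hn : 2 ≤ n) (hρ : ∀ k, ρ k = rhoFun n k) : ρ (n - 1) = n := by
  rw [hρ, rhoFun]; split_ifs <;> omega

lemma rho_n (hn : 2 ≤ n) (hρ : ∀ k, ρ k = rhoFun n k) : ρ n = n - 1 := by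
  rw [hρ, rhoFun]; split_ifs <;> omega

lemma mu_nsub1 (hn : 2 ≤ n) (hμ : ∀ k, μ k = maFun n a k) : μ (n - 1) = n - 1 := by
  rw [hμ, maFun, if_pos ⟨by omega, le_refl _⟩, if_pos (Nat.mul_mod_left a (n - 1))]

lemma mu_mid (hn : 2 ≤ n) (hμ : ∀ k, μ k = maFun n a k) (hcop : Nat.Coprime a (n - 1))
    {x : ℕ} (h1 : 1 ≤ x) (h2 : x ≤ n - 2) :
    μ x = (a * x) % (n - 1) ∧ 1 ≤ (a * x) % (n - 1) ∧ (a * x) % (n - 1) ≤ n - 2 := by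
  have hne : (a * x) % (n - 1) ≠ 0 := by
    intro h
    have hd : (n - 1) ∣ a * x := Nat.dvd_of_mod_eq_zero h
    have hdx : (n - 1) ∣ x := hcop.symm.dvd_of_dvd_mul_left hd
    have := Nat.le_of_dvd (show 0 < x by omega) hdx
    omega
  have hlt : (a * x) % (n - 1) < n - 1 := Nat.mod_lt _ (by omega)
  rw [hμ, maFun, if_pos ⟨h1, by omega⟩, if_neg hne]
  exact ⟨rfl, by omega, by omega⟩

lemma rho_mu_comm (hn : 2 ≤ n) (hρ : ∀ k, ρ k = rhoFun n k)
    (hμ : ∀ k, μ k = maFun n a k) (hcop : Nat.Coprime a (n - 1)) (x : ℕ) :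
    μ (ρ x) = ρ (μ x) := by
  by_cases hx0 : x = 0 ∨ n < x
  · rw [rho_fix hn hρ hx0, mu_fix hn hμ (by omega), rho_fix hn hρ hx0]
  push_neg at hx0
  by_cases hx1 : x ≤ n - 2
  · have h1 : 1 ≤ x := by omega
    have hr : ρ x = n - 1 - x := rho_mid hρ h1 hx1
    obtain ⟨hp, hp1, hp2⟩ := mu_mid hn hμ hcop (show 1 ≤ n - 1 - x by omega)
      (show n - 1 - x ≤ n - 2 by omega)
    obtain ⟨hq, hq1, hq2⟩ := mu_mid hn hμ hcop h1 hx1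
    rw [hr, hp, hq, rho_mid hρ hq1 hq2]
    -- key : p + q = n - 1
    have e : a * (n - 1 - x) + a * x = a * (n - 1) := by
      rw [← Nat.mul_add]; congr 1; omega
    have h0 : (a * (n - 1 - x) + a * x) % (n - 1) = 0 := by
      rw [e]; exact Nat.mul_mod_left a (n - 1)
    have h2 : ((a * (n - 1 - x)) % (n - 1) + (a * x) % (n - 1)) % (n - 1) = 0 := by
      rw [← Nat.add_mod]; exact h0
    obtain ⟨c, hc⟩ := Nat.dvd_of_mod_eq_zero h2
    have hsum : (a * (n - 1 - x)) % (n - 1) + (a * x) % (n - 1) = n - 1 := by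
      rcases c with _ | _ | c
      · omega
      · omega
      · have : (n - 1) * 2 ≤ (n - 1) * (c + 1 + 1) := Nat.mul_le_mul_left _ (by omega)
        omega
    omega
  by_cases hx2 : x = n - 1
  · rw [hx2, rho_nsub1 hn hρ, mu_fix hn hμ (by omega), mu_nsub1 hn hμ,
      rho_nsub1 hn hρ]
  · have hx3 : x = n := by omega
    rw [hx3, rho_n hn hρ, mu_nsub1 hn hμ, mu_fix hn hμ (by omega), rho_n hn hρ]

end CondCAux

/-- If `τ ∈ S_n` satisfies condition (C) and `a ∈ {1,...,n-1}` is coprime to `n-1`,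
then the conjugate `m_a τ m_a⁻¹` also satisfies condition (C). -/
theorem conditionC_conjugate (n : ℕ) (hn : 2 ≤ n) (a : ℕ)
    (ha1 : 1 ≤ a) (ha2 : a ≤ n - 1) (hcop : Nat.Coprime a (n - 1))
    (σ ρ τ μ : Equiv.Perm ℕ)
    (hσ : ∀ k, σ k = sigmaFun n k) (hρ : ∀ k, ρ k = rhoFun n k)
    (hμ : ∀ k, μ k = maFun n a k)
    (hC : ConditionC n σ ρ τ) :
    ConditionC n σ ρ (μ * τ * μ⁻¹) := by
  obtain ⟨hord, hτn, hτfix, hτeq⟩ := hC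
  have hτ2 : ∀ x, τ (τ x) = x := by
    intro x
    have h2 : τ * τ = 1 := by rw [← sq, ← hord]; exact pow_orderOf_eq_one τ
    calc τ (τ x) = (τ * τ) x := rfl
      _ = x := by rw [h2]; rfl
  have hτn1 : τ (n - 1) = n := by
    have := hτ2 n; rw [hτn] at this; exact this
  have hτmem : ∀ x, 1 ≤ x → x ≤ n - 2 → 1 ≤ τ x ∧ τ x ≤ n - 2 := by
    intro x h1 h2
    have hne0 : τ x ≠ 0 := by
      intro h
      have h' := hτ2 x
      rw [h, hτfix 0 (Or.inl rfl)] at h'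
      omega
    have hnen : τ x ≠ n := by
      intro h
      have h' := hτ2 x
      rw [h, hτn] at h'; omega
    have hnen1 : τ x ≠ n - 1 := by
      intro h
      have h' := hτ2 x
      rw [h, hτn1] at h'; omega
    have hlt : ¬ n < τ x := by
      intro h
      have h' := hτfix (τ x) (Or.inr h)
      rw [hτ2 x] at h'
      omega
    omega
  refine ⟨?_, ?_, ?_, ?_⟩
  · have hsc : SemiconjBy μ τ (μ * τ * μ⁻¹) := by unfold SemiconjBy; group
    rw [← SemiconjBy.orderOf_eq μ hsc]; exact hord
  · simp only [Equiv.Perm.mul_apply]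
    rw [CondCAux.mu_inv_fix hn hμ (by omega), hτn, CondCAux.mu_nsub1 hn hμ]
  · intro k hk
    simp only [Equiv.Perm.mul_apply]
    rw [CondCAux.mu_inv_fix hn hμ (by omega), hτfix k hk,
      CondCAux.mu_fix hn hμ (by omega)]
  · intro k hk1 hk2
    have hn3 : 3 ≤ n := by omega
    obtain ⟨b, -, hb⟩ := Nat.exists_mul_mod_eq_one_of_coprime hcop (by omega)
    have hcopb : Nat.Coprime b (n - 1) := by
      have h2 : Nat.gcd b (n - 1) ∣ a * b := Dvd.dvd.mul_left (Nat.gcd_dvd_left _ _) a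
      have h3 : Nat.gcd b (n - 1) ∣ (a * b) % (n - 1) :=
        (Nat.dvd_mod_iff (Nat.gcd_dvd_right b (n - 1))).mpr h2
      rw [hb] at h3
      exact Nat.dvd_one.mp h3
    set j := (b * k) % (n - 1) with hjdef
    have hjlt : j < n - 1 := Nat.mod_lt _ (by omega)
    have hj0 : j ≠ 0 := by
      intro h
      have hd : (n - 1) ∣ b * k := Nat.dvd_of_mod_eq_zero h
      have hdk : (n - 1) ∣ k := hcopb.symm.dvd_of_dvd_mul_left hd
      have := Nat.le_of_dvd (show 0 < k by omega) hdk
      omega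
    have hj1 : 1 ≤ j := by omega
    have hj2 : j ≤ n - 2 := by omega
    obtain ⟨m1, m2, m3⟩ := CondCAux.mu_spec hn hμ hj1 (by omega)
    have hab : a * b ≡ 1 [MOD n - 1] := by
      unfold Nat.ModEq; rw [hb, Nat.mod_eq_of_lt (by omega)]
    have hajk : (a * j) % (n - 1) = k % (n - 1) := by
      calc (a * j) % (n - 1) = (a * (b * k)) % (n - 1) :=
            (Nat.mod_modEq (b * k) (n - 1)).mul_left a
        _ = k % (n - 1) := by
            have h' : a * (b * k) ≡ 1 * k [MOD n - 1] := by
              rw [← mul_assoc]; exact hab.mul_right k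
            simpa [Nat.ModEq] using h'
    have hμj : μ j = k := by
      apply CondCAux.eq_of_Icc_mod m1 m2 hk1 (by omega)
      rw [m3, hajk]
    have hμinvk : μ⁻¹ k = j := by rw [← hμj, Equiv.Perm.inv_apply_self]
    obtain ⟨ht1a, ht1b⟩ := hτmem j hj1 hj2
    have hρτj : ρ (τ j) = n - 1 - τ j := CondCAux.rho_mid hρ ht1a ht1b
    have hρmem : 1 ≤ ρ (τ j) ∧ ρ (τ j) ≤ n - 2 := by rw [hρτj]; omega
    obtain ⟨ht2a, ht2b⟩ := hτmem _ hρmem.1 hρmem.2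
    have hexp1 : (μ * τ * μ⁻¹) k = μ (τ j) := by
      simp only [Equiv.Perm.mul_apply]; rw [hμinvk]
    have hcomm := CondCAux.rho_mu_comm hn hρ hμ hcop
    have hexp2 : (μ * τ * μ⁻¹) (ρ ((μ * τ * μ⁻¹) k)) = μ (τ (ρ (τ j))) := by
      rw [hexp1, ← hcomm (τ j)]
      simp only [Equiv.Perm.mul_apply, Equiv.Perm.inv_apply_self]
    obtain ⟨q1, q2, q3⟩ := CondCAux.mu_spec hn hμ ht1a (show τ j ≤ n - 1 by omega)
    obtain ⟨r1, r2, r3⟩ := CondCAux.mu_spec hn hμ ht2a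
      (show τ (ρ (τ j)) ≤ n - 1 by omega)
    have hs1 : σ ^ (μ (τ j)) = σ ^ (a * τ j) := CondCAux.sigma_pow_congr hn hσ q3
    have hs2 : σ ^ (μ (τ (ρ (τ j)))) = σ ^ (a * τ (ρ (τ j))) :=
      CondCAux.sigma_pow_congr hn hσ r3
    have hσk : σ ^ k = μ * σ ^ j * μ⁻¹ := by
      rw [CondCAux.conj_sigma_pow hn hσ hμ j]
      exact CondCAux.sigma_pow_congr hn hσ hajk.symm
    rw [hexp2, hexp1, hs1, hs2, hσk,
      ← CondCAux.conj_sigma_pow hn hσ hμ (τ j),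
      ← CondCAux.conj_sigma_pow hn hσ hμ (τ (ρ (τ j)))]
    calc (μ * τ * μ⁻¹) * (μ * σ ^ j * μ⁻¹) * (μ * τ * μ⁻¹)
        = μ * (τ * σ ^ j * τ) * μ⁻¹ := by group
      _ = μ * (σ ^ (τ j) * τ * σ ^ (τ (ρ (τ j)))) * μ⁻¹ := by rw [hτeq j hj1 hj2]
      _ = (μ * σ ^ (τ j) * μ⁻¹) * (μ * τ * μ⁻¹) * (μ * σ ^ (τ (ρ (τ j))) * μ⁻¹) := by
          group
end

section
/- Let n ≥ 2 and suppose τ ∈ S_n satisfies condition (C). Then the subgroup ⟨σ,τ⟩ of S_n generated by σ and τ has exactly n(n−1) elements. -/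
private lemma mod_shift_inj {m a b : ℕ} (hm : 0 < m) (ha : a < m) (hb : b < m)
    (h : (m - 1 + a) % m = (m - 1 + b) % m) : a = b := by
  have key : ∀ x : ℕ, x < m → (m - 1 + x) % m = if x = 0 then m - 1 else x - 1 := by
    intro x hx
    rcases Nat.eq_zero_or_pos x with h0 | h0
    · simp [h0, Nat.mod_eq_of_lt (show m - 1 < m by omega)]
    · rw [if_neg (by omega), Nat.mod_eq_sub_mod (by omega),
        Nat.mod_eq_of_lt (by omega)]
      omega
  rw [key a ha, key b hb] at h
  split_ifs at h <;> omega

private lemma perm_pow_fix (g : Equiv.Perm ℕ) (k : ℕ) (h : g k = k) (a : ℕ) :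
    (g ^ a) k = k := by
  induction a with
  | zero => simp
  | succ a ih => rw [pow_succ, Equiv.Perm.mul_apply, h, ih]

/-- If `τ ∈ S_n` satisfies condition (C), then the subgroup `⟨σ,τ⟩` has exactly
`n(n-1)` elements. -/
theorem card_closure_of_conditionC (n : ℕ) (hn : 2 ≤ n) (σ ρ τ : Equiv.Perm ℕ)
    (hσ : ∀ k, σ k = sigmaFun n k) (hρ : ∀ k, ρ k = rhoFun n k)
    (hC : ConditionC n σ ρ τ) :
    Nat.card (Subgroup.closure ({σ, τ} : Set (Equiv.Perm ℕ))) = n * (n - 1) := by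
  obtain ⟨hord, hτn, -, hrel⟩ := hC
  have hm : 0 < n - 1 := by omega
  -- τ is an involution
  have ht2 : τ * τ = 1 := by
    have h := pow_orderOf_eq_one τ
    rwa [hord, pow_two] at h
  -- basic facts about σ
  have hσ1 : ∀ k, 1 ≤ k → k ≤ n - 1 → σ k = k % (n - 1) + 1 := by
    intro k h1 h2
    rw [hσ k]; unfold sigmaFun
    by_cases h : k ≤ n - 2
    · rw [if_pos ⟨h1, h⟩, Nat.mod_eq_of_lt (by omega)]
    · rw [if_neg (by omega), if_pos (by omega : k = n - 1),
        (by omega : k = n - 1), Nat.mod_self]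
  have hσfix : ∀ k, k = 0 ∨ n - 1 < k → σ k = k := by
    intro k hk
    rw [hσ k]; unfold sigmaFun
    split_ifs <;> omega
  have hσn : σ n = n := hσfix n (Or.inr (by omega))
  have hpowfix_n : ∀ a, (σ ^ a) n = n := perm_pow_fix σ n hσn
  have hpow : ∀ a k, 1 ≤ k → k ≤ n - 1 → (σ ^ a) k = (k - 1 + a) % (n - 1) + 1 := by
    intro a
    induction a with
    | zero =>
      intro k h1 h2
      simp only [pow_zero, Equiv.Perm.one_apply, Nat.add_zero]
      rw [Nat.mod_eq_of_lt (show k - 1 < n - 1 by omega)]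
      omega
    | succ a ih =>
      intro k h1 h2
      rw [pow_succ', Equiv.Perm.mul_apply, ih k h1 h2]
      have hlt : (k - 1 + a) % (n - 1) < n - 1 := Nat.mod_lt _ hm
      rw [hσ1 _ (by omega) (by omega), Nat.mod_add_mod,
        (show k - 1 + a + 1 = k - 1 + (a + 1) by omega)]
  have hσm1 : σ ^ (n - 1) = 1 := by
    ext k
    by_cases hk : 1 ≤ k ∧ k ≤ n - 1
    · rw [hpow _ _ hk.1 hk.2, Equiv.Perm.one_apply, Nat.add_mod_right,
        Nat.mod_eq_of_lt (show k - 1 < n - 1 by omega)]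
      omega
    · rw [perm_pow_fix σ k (hσfix k (by omega)) _, Equiv.Perm.one_apply]
  have hpow_mod : ∀ a, σ ^ a = σ ^ (a % (n - 1)) := by
    intro a
    conv_lhs => rw [← Nat.div_add_mod a (n - 1)]
    rw [pow_add, pow_mul, hσm1, one_pow, one_mul]
  have hpow_n1 : ∀ a, (σ ^ a) (n - 1) = (n - 2 + a) % (n - 1) + 1 := by
    intro a
    rw [hpow a (n - 1) (by omega) le_rfl, (show n - 1 - 1 = n - 2 by omega)]
  have hpow_inj : ∀ a b, a < n - 1 → b < n - 1 → σ ^ a = σ ^ b → a = b := by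
    intro a b ha hb h
    have h2 : (σ ^ a) (n - 1) = (σ ^ b) (n - 1) := by rw [h]
    rw [hpow_n1, hpow_n1] at h2
    have h3 : (n - 1 - 1 + a) % (n - 1) = (n - 1 - 1 + b) % (n - 1) := by
      rw [(show n - 1 - 1 = n - 2 by omega)]; omega
    exact mod_shift_inj hm ha hb h3
  -- value of σ^a τ σ^b at n
  have hmix : ∀ a b, (σ ^ a * τ * σ ^ b) n = (n - 2 + a) % (n - 1) + 1 := by
    intro a b
    rw [Equiv.Perm.mul_apply, Equiv.Perm.mul_apply, hpowfix_n b, hτn, hpow_n1]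
  -- inverses of σ-powers
  have hinvpow : ∀ a, σ ^ a * σ ^ ((n - 2) * a) = 1 := by
    intro a
    rw [← pow_add, (show a + (n - 2) * a = (n - 1) * a by
      rw [(show n - 1 = (n - 2) + 1 by omega)]; ring), pow_mul, hσm1, one_pow]
  -- the subgroup
  let S : Subgroup (Equiv.Perm ℕ) :=
    { carrier := {g | ∃ a b : ℕ, g = σ ^ a ∨ g = σ ^ a * τ * σ ^ b}
      one_mem' := ⟨0, 0, Or.inl (pow_zero σ).symm⟩
      mul_mem' := by
        rintro x y ⟨a, b, rfl | rfl⟩ ⟨a', b', rfl | rfl⟩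
        · exact ⟨a + a', 0, Or.inl (pow_add σ a a').symm⟩
        · exact ⟨a + a', b', Or.inr (by rw [pow_add]; group)⟩
        · exact ⟨a, b + a', Or.inr (by rw [pow_add]; group)⟩
        · set c := (b + a') % (n - 1) with hc
          have hσc : σ ^ b * σ ^ a' = σ ^ c := by rw [← pow_add, hpow_mod (b + a')]
          have hstep : σ ^ a * τ * σ ^ b * (σ ^ a' * τ * σ ^ b') =
              σ ^ a * (τ * σ ^ c * τ) * σ ^ b' := by
            rw [← hσc]; group
          by_cases hc0 : c = 0
          · refine ⟨a + b', 0, Or.inl ?_⟩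
            rw [hstep, hc0, pow_zero, mul_one, ht2, mul_one, ← pow_add]
          · have h1 : 1 ≤ c := by omega
            have h2 : c ≤ n - 2 := by
              have := Nat.mod_lt (b + a') hm
              omega
            have key := hrel c h1 h2
            refine ⟨a + τ c, τ (ρ (τ c)) + b', Or.inr ?_⟩
            rw [hstep, key, pow_add, pow_add]
            group
      inv_mem' := by
        rintro x ⟨a, b, rfl | rfl⟩
        · exact ⟨(n - 2) * a, 0,
            Or.inl (inv_eq_of_mul_eq_one_right (hinvpow a))⟩
        · refine ⟨(n - 2) * b, (n - 2) * a, Or.inr ?_⟩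
          apply inv_eq_of_mul_eq_one_right
          calc σ ^ a * τ * σ ^ b * (σ ^ ((n - 2) * b) * τ * σ ^ ((n - 2) * a))
              = σ ^ a * (τ * (σ ^ b * σ ^ ((n - 2) * b)) * τ) * σ ^ ((n - 2) * a) := by
                group
            _ = σ ^ a * σ ^ ((n - 2) * a) := by
                rw [hinvpow b, mul_one, ht2, mul_one]
            _ = 1 := hinvpow a }
  -- the closure equals S
  have hSclos : Subgroup.closure ({σ, τ} : Set (Equiv.Perm ℕ)) = S := by
    apply le_antisymm
    · rw [Subgroup.closure_le]
      rintro g hg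
      simp only [Set.mem_insert_iff, Set.mem_singleton_iff] at hg
      rcases hg with hg | hg
      · refine ⟨1, 0, Or.inl ?_⟩; rw [hg, pow_one]
      · refine ⟨0, 0, Or.inr ?_⟩; rw [hg]; group
    · rintro g ⟨a, b, rfl | rfl⟩
      · exact pow_mem (Subgroup.subset_closure (by simp)) a
      · exact mul_mem
          (mul_mem (pow_mem (Subgroup.subset_closure (by simp)) a)
            (Subgroup.subset_closure (by simp)))
          (pow_mem (Subgroup.subset_closure (by simp)) b)
  -- parametrization
  let f : (Fin (n - 1) ⊕ Fin (n - 1) × Fin (n - 1)) → Equiv.Perm ℕ := fun x =>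
    match x with
    | .inl a => σ ^ (a : ℕ)
    | .inr (a, b) => σ ^ (a : ℕ) * τ * σ ^ (b : ℕ)
  have hrange : (S : Set (Equiv.Perm ℕ)) = Set.range f := by
    ext g
    constructor
    · rintro ⟨a, b, rfl | rfl⟩
      · exact ⟨.inl ⟨a % (n - 1), Nat.mod_lt _ hm⟩, (hpow_mod a).symm⟩
      · refine ⟨.inr (⟨a % (n - 1), Nat.mod_lt _ hm⟩, ⟨b % (n - 1), Nat.mod_lt _ hm⟩), ?_⟩
        show σ ^ (a % (n - 1)) * τ * σ ^ (b % (n - 1)) = _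
        rw [← hpow_mod a, ← hpow_mod b]
    · rintro ⟨(a | ⟨a, b⟩), rfl⟩
      · exact ⟨a, 0, Or.inl rfl⟩
      · exact ⟨a, b, Or.inr rfl⟩
  have hinj : Function.Injective f := by
    rintro (a | ⟨a, b⟩) (a' | ⟨a', b'⟩) h
    · have h' : σ ^ (a : ℕ) = σ ^ (a' : ℕ) := h
      exact congrArg Sum.inl (Fin.ext (hpow_inj _ _ a.2 a'.2 h'))
    · exfalso
      have h2 : (σ ^ (a : ℕ)) n = (σ ^ (a' : ℕ) * τ * σ ^ (b' : ℕ)) n :=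
        congrArg (fun g : Equiv.Perm ℕ => g n) h
      rw [hpowfix_n, hmix] at h2
      have := Nat.mod_lt (n - 2 + (a' : ℕ)) hm
      omega
    · exfalso
      have h2 : (σ ^ (a : ℕ) * τ * σ ^ (b : ℕ)) n = (σ ^ (a' : ℕ)) n :=
        congrArg (fun g : Equiv.Perm ℕ => g n) h
      rw [hpowfix_n, hmix] at h2
      have := Nat.mod_lt (n - 2 + (a : ℕ)) hm
      omega
    · have h' : σ ^ (a : ℕ) * τ * σ ^ (b : ℕ) = σ ^ (a' : ℕ) * τ * σ ^ (b' : ℕ) := h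
      have h2 : (σ ^ (a : ℕ) * τ * σ ^ (b : ℕ)) n =
          (σ ^ (a' : ℕ) * τ * σ ^ (b' : ℕ)) n := by rw [h']
      rw [hmix, hmix] at h2
      have ha : (a : ℕ) = (a' : ℕ) := by
        refine mod_shift_inj hm a.2 a'.2 ?_
        rw [(show n - 1 - 1 = n - 2 by omega)]; omega
      rw [← ha] at h'
      have hb : σ ^ (b : ℕ) = σ ^ (b' : ℕ) :=
        mul_left_cancel h'
      have hbv : (b : ℕ) = (b' : ℕ) := hpow_inj _ _ b.2 b'.2 hb
      have ea : a = a' := Fin.ext ha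
      have eb : b = b' := Fin.ext hbv
      subst ea; subst eb; rfl
  -- counting
  rw [hSclos]
  have hcard1 : Nat.card S = Nat.card (Set.range f) :=
    Nat.card_congr (Equiv.setCongr hrange)
  rw [hcard1, Nat.card_range_of_injective hinj]
  simp only [Nat.card_eq_fintype_card, Fintype.card_sum, Fintype.card_prod,
    Fintype.card_fin]
  obtain ⟨k, rfl⟩ : ∃ k, n = k + 2 := ⟨n - 2, by omega⟩
  have e : k + 2 - 1 = k + 1 := rfl
  rw [e]
  ring
end

section
/- Let n ≥ 2, let σ ∈ S_n be the (n−1)-cycle (1,2,...,n−1) fixing n, and let τ ∈ S_n be any permutation of order 2 with τ(n) = n−1 (hence τ(n−1) = n). If j,k ∈ ℤ are such that σ^j τ σ^k τ = Id, then (n−1) divides j and (n−1) divides k. -/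
/-- Let `σ` be the `(n-1)`-cycle `(1,...,n-1)` fixing `n`, and let `τ ∈ S_n` be any
permutation of order `2` with `τ(n) = n-1`. If `σ^j τ σ^k τ = Id` with `j, k ∈ ℤ`,
then `(n-1) ∣ j` and `(n-1) ∣ k`. -/
theorem dvd_of_sigma_tau_word_eq_one (n : ℕ) (hn : 2 ≤ n) (σ τ : Equiv.Perm ℕ)
    (hσ : ∀ k, σ k = sigmaFun n k)
    (hτsupp : ∀ k : ℕ, k = 0 ∨ n < k → τ k = k)
    (hτord : orderOf τ = 2) (hτn : τ n = n - 1)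
    (j k : ℤ) (h : σ ^ j * τ * σ ^ k * τ = 1) :
    ((n : ℤ) - 1) ∣ j ∧ ((n : ℤ) - 1) ∣ k := by
  obtain ⟨M, rfl⟩ : ∃ M, n = M + 2 := ⟨n - 2, by omega⟩
  -- basic facts about σ
  have hσ1 : ∀ x, 1 ≤ x → x ≤ M → σ x = x + 1 := by
    intro x h1 h2
    rw [hσ, sigmaFun, if_pos ⟨h1, by omega⟩]
  have hσ2 : σ (M + 1) = 1 := by
    rw [hσ, sigmaFun, if_neg (by omega), if_pos (by omega)]
  have hσ3 : ∀ x, x = 0 ∨ M + 1 < x → σ x = x := by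
    intro x hx
    rw [hσ, sigmaFun, if_neg (by omega), if_neg (by omega)]
  -- the iteration formula
  have hA : ∀ (m : ℕ) (x : ℕ), 1 ≤ x → x ≤ M + 1 →
      (σ ^ m) x = 1 + (x - 1 + m) % (M + 1) := by
    intro m
    induction m with
    | zero =>
      intro x h1 h2
      rw [pow_zero, Equiv.Perm.one_apply, Nat.add_zero,
        Nat.mod_eq_of_lt (by omega)]
      omega
    | succ m ih =>
      intro x h1 h2
      rw [pow_succ', Equiv.Perm.mul_apply, ih x h1 h2]
      set r := (x - 1 + m) % (M + 1) with hr
      have hrlt : r < M + 1 := Nat.mod_lt _ (by omega)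
      have hmod : (x - 1 + (m + 1)) % (M + 1) = (r + 1) % (M + 1) := by
        have he : x - 1 + (m + 1) = (x - 1 + m) + 1 := by omega
        rw [he, Nat.add_mod (x - 1 + m) 1, ← hr, Nat.add_mod r 1,
          Nat.mod_eq_of_lt hrlt]
      by_cases hc : r = M
      · rw [hmod, hc, Nat.mod_self, show 1 + M = M + 1 by omega, hσ2]
      · rw [hmod, Nat.mod_eq_of_lt (by omega),
          hσ1 (1 + r) (by omega) (by omega)]
        omega
  have hfix : ∀ (m : ℕ) (x : ℕ), x = 0 ∨ M + 1 < x → (σ ^ m) x = x := by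
    intro m
    induction m with
    | zero => intro x _; rw [pow_zero, Equiv.Perm.one_apply]
    | succ m ih =>
      intro x hx
      rw [pow_succ', Equiv.Perm.mul_apply, ih x hx, hσ3 x hx]
  have hσM : σ ^ (M + 1) = 1 := by
    ext x
    by_cases hx : 1 ≤ x ∧ x ≤ M + 1
    · rw [hA (M + 1) x hx.1 hx.2, Nat.add_mod_right,
        Nat.mod_eq_of_lt (by omega), Equiv.Perm.one_apply]
      omega
    · rw [hfix (M + 1) x (by omega), Equiv.Perm.one_apply]
  -- zpow reduction
  have hz : ∀ t : ℤ, σ ^ t = σ ^ (t % ((M : ℤ) + 1)).toNat := by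
    intro t
    have hpos : (0 : ℤ) < (M : ℤ) + 1 := by positivity
    have hnn : (0 : ℤ) ≤ t % ((M : ℤ) + 1) := Int.emod_nonneg t (by omega)
    conv_lhs => rw [show t = ((M : ℤ) + 1) * (t / ((M : ℤ) + 1)) + t % ((M : ℤ) + 1) from
      (Int.mul_ediv_add_emod t _).symm]
    rw [zpow_add, zpow_mul]
    have : σ ^ ((M : ℤ) + 1) = 1 := by
      rw [show ((M : ℤ) + 1) = ((M + 1 : ℕ) : ℤ) by push_cast; ring, zpow_natCast, hσM]
    rw [this, one_zpow, one_mul, ← zpow_natCast σ (t % ((M : ℤ) + 1)).toNat,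
      Int.toNat_of_nonneg hnn]
  have hzlt : ∀ t : ℤ, (t % ((M : ℤ) + 1)).toNat < M + 1 := by
    intro t
    have := Int.emod_lt_of_pos t (show (0:ℤ) < (M:ℤ)+1 by positivity)
    omega
  -- τ facts
  have hττ : ∀ x, τ (τ x) = x := by
    intro x
    have h2 : τ ^ 2 = 1 := by rw [← hτord]; exact pow_orderOf_eq_one τ
    have := Equiv.ext_iff.mp h2 x
    rwa [pow_two, Equiv.Perm.mul_apply, Equiv.Perm.one_apply] at this
  have hτn' : τ (M + 2) = M + 1 := by
    have := hτn
    norm_num at this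
    exact this
  have hτM1 : τ (M + 1) = M + 2 := by rw [← hτn', hττ]
  set r := (k % ((M : ℤ) + 1)).toNat with hrdef
  set rj := (j % ((M : ℤ) + 1)).toNat with hrjdef
  have hrlt := hzlt k
  have hrjlt := hzlt j
  -- apply the relation to n = M+2
  have happ : (σ ^ j) (τ ((σ ^ k) (τ (M + 2)))) = M + 2 := by
    have := Equiv.ext_iff.mp h (M + 2)
    simpa only [Equiv.Perm.mul_apply, Equiv.Perm.one_apply] using this
  rw [hτn', hz k, hz j, ← hrdef, ← hrjdef] at happ
  have hσkM1 : (σ ^ r) (M + 1) = 1 + (M + r) % (M + 1) := by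
    have := hA r (M + 1) (by omega) (by omega)
    simpa using this
  have hr0 : r = 0 := by
    by_contra hr0
    have hr1 : 1 ≤ r := by omega
    have hmod : (M + r) % (M + 1) = r - 1 := by
      have : M + r = (M + 1) + (r - 1) := by omega
      rw [this, Nat.add_mod_left, Nat.mod_eq_of_lt (by omega)]
    have hval : (σ ^ r) (M + 1) = r := by rw [hσkM1, hmod]; omega
    rw [hval] at happ
    -- now τ r ∈ {1,...,M}
    have ht0 : τ r ≠ 0 := by
      intro h0
      have := hττ r
      rw [h0, hτsupp 0 (Or.inl rfl)] at this
      omega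
    have htle : τ r ≤ M + 2 := by
      by_contra hgt
      have := hτsupp (τ r) (Or.inr (by omega))
      rw [hττ r] at this  -- τ (τ r) = τ r, so r = τ r
      omega
    have htn2 : τ r ≠ M + 2 := by
      intro he
      have := hττ r
      rw [he, hτn'] at this
      omega
    have htn1 : τ r ≠ M + 1 := by
      intro he
      have := hττ r
      rw [he, hτM1] at this
      omega
    have : (σ ^ rj) (τ r) = 1 + (τ r - 1 + rj) % (M + 1) :=
      hA rj (τ r) (by omega) (by omega)
    rw [this] at happ
    have := Nat.mod_lt (τ r - 1 + rj) (show 0 < M + 1 by omega)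
    omega
  have hkdvd : ((M : ℤ) + 1) ∣ k := by
    apply Int.dvd_of_emod_eq_zero
    have hnn : (0 : ℤ) ≤ k % ((M : ℤ) + 1) := Int.emod_nonneg k (by omega)
    omega
  -- now show σ^j = 1
  have hσj : σ ^ rj = 1 := by
    have hk1 : σ ^ k = 1 := by rw [hz k, ← hrdef, hr0, pow_zero]
    have hτ2 : τ * τ = 1 := by
      have h2 : τ ^ 2 = 1 := by rw [← hτord]; exact pow_orderOf_eq_one τ
      rwa [pow_two] at h2
    rw [hk1, mul_one, mul_assoc, hτ2, mul_one, hz j, ← hrjdef] at h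
    exact h
  have hrj0 : rj = 0 := by
    have := Equiv.ext_iff.mp hσj 1
    rw [hA rj 1 (le_refl 1) (by omega), Equiv.Perm.one_apply] at this
    simp at this
    rw [Nat.mod_eq_of_lt hrjlt] at this
    omega
  have hjdvd : ((M : ℤ) + 1) ∣ j := by
    apply Int.dvd_of_emod_eq_zero
    have hnn : (0 : ℤ) ≤ j % ((M : ℤ) + 1) := Int.emod_nonneg j (by omega)
    omega
  have hcast : ((M + 2 : ℕ) : ℤ) - 1 = (M : ℤ) + 1 := by push_cast; ring
  rw [hcast]
  exact ⟨hjdvd, hkdvd⟩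
end

section
/- Let n ≥ 2 and suppose τ ∈ S_n satisfies condition (C). Then every element g of the subgroup ⟨σ,τ⟩ generated by σ and τ can be written either as g = σ^k or as g = σ^j τ σ^k for some integers j,k with 0 ≤ j,k ≤ n−2; that is, every element of ⟨σ,τ⟩ can be expressed using τ at most once. -/
lemma sigma_cycle_aux (n : ℕ) (hn : 2 ≤ n) (σ : Equiv.Perm ℕ) (hσ : ∀ k, σ k = sigmaFun n k) :
    ∀ m k, 1 ≤ k → k ≤ n - 1 → (σ ^ m) k = (k - 1 + m) % (n - 1) + 1 := by
  intro m
  induction m with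
  | zero =>
    intro k hk1 hk2
    rw [pow_zero, Equiv.Perm.one_apply]
    simp only [Nat.add_zero, Nat.mod_eq_of_lt (show k - 1 < n - 1 by omega)]
    omega
  | succ m ih =>
    intro k hk1 hk2
    rw [pow_succ, Equiv.Perm.mul_apply]
    rcases Nat.lt_or_ge k (n - 1) with h | h
    · have hs : σ k = k + 1 := by
        rw [hσ]; unfold sigmaFun; rw [if_pos ⟨hk1, by omega⟩]
      rw [hs, ih (k + 1) (by omega) (by omega)]
      congr 2
      omega
    · have hk : k = n - 1 := by omega
      have hs : σ k = 1 := by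
        rw [hσ]; unfold sigmaFun; rw [if_neg (by omega), if_pos hk]
      rw [hs, ih 1 le_rfl (by omega)]
      have h1 : k - 1 + (m + 1) = (n - 1) + m := by omega
      rw [h1, Nat.add_mod_left]
      norm_num

lemma sigma_pow_fixed (n : ℕ) (hn : 2 ≤ n) (σ : Equiv.Perm ℕ)
    (hσ : ∀ k, σ k = sigmaFun n k) : ∀ m k, k = 0 ∨ n ≤ k → (σ ^ m) k = k := by
  intro m k hk
  have hfix : σ k = k := by
    rw [hσ]; unfold sigmaFun
    rw [if_neg (by omega), if_neg (by omega)]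
  induction m with
  | zero => simp
  | succ m ih => rw [pow_succ, Equiv.Perm.mul_apply, hfix, ih]

lemma sigma_pow_card (n : ℕ) (hn : 2 ≤ n) (σ : Equiv.Perm ℕ)
    (hσ : ∀ k, σ k = sigmaFun n k) : σ ^ (n - 1) = 1 := by
  ext k
  rcases Nat.lt_or_ge k 1 with h | h
  · rw [sigma_pow_fixed n hn σ hσ _ k (Or.inl (by omega))]; rfl
  rcases Nat.lt_or_ge k n with h2 | h2
  · rw [sigma_cycle_aux n hn σ hσ _ k h (by omega)]
    have h3 : k - 1 + (n - 1) = (n - 1) + (k - 1) := by omega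
    rw [h3, Nat.add_mod_left, Nat.mod_eq_of_lt (by omega : k - 1 < n - 1)]
    simp; omega
  · rw [sigma_pow_fixed n hn σ hσ _ k (Or.inr h2)]; rfl

lemma sigma_pow_red (n : ℕ) (hn : 2 ≤ n) (σ : Equiv.Perm ℕ)
    (hσ : ∀ k, σ k = sigmaFun n k) (a : ℕ) : σ ^ a = σ ^ (a % (n - 1)) := by
  conv_lhs => rw [← Nat.div_add_mod a (n - 1)]
  rw [pow_add, pow_mul, sigma_pow_card n hn σ hσ, one_pow, one_mul]

/-- If `τ ∈ S_n` satisfies condition (C), then every element of `⟨σ,τ⟩` is of the form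
`σ^k` or `σ^j τ σ^k` with `0 ≤ j, k ≤ n-2`: every element of `⟨σ,τ⟩` can be
expressed using `τ` at most once. -/
theorem mem_closure_form_of_conditionC (n : ℕ) (hn : 2 ≤ n) (σ ρ τ : Equiv.Perm ℕ)
    (hσ : ∀ k, σ k = sigmaFun n k) (hρ : ∀ k, ρ k = rhoFun n k)
    (hC : ConditionC n σ ρ τ) :
    ∀ g ∈ Subgroup.closure ({σ, τ} : Set (Equiv.Perm ℕ)),
      (∃ k : ℕ, k ≤ n - 2 ∧ g = σ ^ k) ∨
      (∃ j k : ℕ, j ≤ n - 2 ∧ k ≤ n - 2 ∧ g = σ ^ j * τ * σ ^ k) := by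
  obtain ⟨hord, hτn, hfix, hrel⟩ := hC
  have hred : ∀ a, σ ^ a = σ ^ (a % (n - 1)) := sigma_pow_red n hn σ hσ
  have hcard : σ ^ (n - 1) = 1 := sigma_pow_card n hn σ hσ
  have hlt : ∀ a, a % (n - 1) ≤ n - 2 := fun a => by
    have := Nat.mod_lt a (show 0 < n - 1 by omega); omega
  have hττ : τ * τ = 1 := by
    have h := pow_orderOf_eq_one τ
    rwa [hord, pow_two] at h
  have hτinv : τ⁻¹ = τ := inv_eq_of_mul_eq_one_left hττ
  have hττk : ∀ k, τ (τ k) = k := fun k => by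
    have h : (τ * τ) k = (1 : Equiv.Perm ℕ) k := by rw [hττ]
    simpa using h
  have hτn1 : τ (n - 1) = n := by
    conv_lhs => rw [← hτn]
    exact hττk n
  have hτmem : ∀ k, 1 ≤ k → k ≤ n - 2 → 1 ≤ τ k ∧ τ k ≤ n - 2 := by
    intro k h1 h2
    constructor
    · by_contra h; push_neg at h
      have h0 : τ k = 0 := by omega
      have hk := hττk k
      rw [h0, hfix 0 (Or.inl rfl)] at hk
      omega
    · by_contra h; push_neg at h
      rcases Nat.lt_or_ge n (τ k) with hgt | hle
      · have hfx := hfix (τ k) (Or.inr hgt)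
        have hk := hττk k
        rw [hfx] at hk
        omega
      · rcases (by omega : τ k = n - 1 ∨ τ k = n) with he | he
        · have hk := hττk k; rw [he, hτn1] at hk; omega
        · have hk := hττk k; rw [he, hτn] at hk; omega
  have hρval : ∀ k, 1 ≤ k → k ≤ n - 2 → ρ k = n - 1 - k := by
    intro k h1 h2
    rw [hρ]; unfold rhoFun; rw [if_pos ⟨h1, h2⟩]
  have hsinv : ∀ a, a ≤ n - 2 → (σ ^ a)⁻¹ = σ ^ (n - 1 - a) := by
    intro a ha
    refine inv_eq_of_mul_eq_one_left ?_
    rw [← pow_add, show n - 1 - a + a = n - 1 by omega, hcard]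
  intro g hg
  refine Subgroup.closure_induction ?_ ?_ ?_ ?_ hg
  · intro x hx
    rcases hx with rfl | hx
    · left
      exact ⟨1 % (n - 1), hlt 1, by rw [← hred 1, pow_one]⟩
    · rw [Set.mem_singleton_iff] at hx
      subst hx
      right
      exact ⟨0, 0, Nat.zero_le _, Nat.zero_le _, by simp⟩
  · left; exact ⟨0, Nat.zero_le _, (pow_zero σ).symm⟩
  · rintro x y _ _ (⟨a, ha, rfl⟩ | ⟨a, b, ha, hb, rfl⟩) (⟨c, hc, rfl⟩ | ⟨c, d, hc, hd, rfl⟩)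
    · left
      exact ⟨(a + c) % (n - 1), hlt _, by rw [← pow_add, hred]⟩
    · right
      refine ⟨(a + c) % (n - 1), d, hlt _, hd, ?_⟩
      rw [← hred, pow_add]; group
    · right
      refine ⟨a, (b + c) % (n - 1), ha, hlt _, ?_⟩
      rw [← hred, pow_add]; group
    · set m := (b + c) % (n - 1) with hmdef
      have hm : σ ^ b * σ ^ c = σ ^ m := by rw [← pow_add, hred]
      by_cases h0 : m = 0
      · left
        refine ⟨(a + d) % (n - 1), hlt _, ?_⟩
        have key : σ ^ b * σ ^ c = 1 := by rw [hm, h0, pow_zero]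
        rw [← hred, pow_add]
        calc σ ^ a * τ * σ ^ b * (σ ^ c * τ * σ ^ d)
            = σ ^ a * (τ * (σ ^ b * σ ^ c) * τ) * σ ^ d := by group
          _ = σ ^ a * σ ^ d := by rw [key, mul_one, hττ, mul_one]
      · right
        have hm1 : 1 ≤ m := by omega
        have hm2 : m ≤ n - 2 := hlt _
        obtain ⟨ht1, ht2⟩ := hτmem m hm1 hm2
        have hρτ : ρ (τ m) = n - 1 - τ m := hρval _ ht1 ht2
        have hρ1 : 1 ≤ ρ (τ m) := by omega
        have hρ2 : ρ (τ m) ≤ n - 2 := by omega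
        obtain ⟨hx1, hx2⟩ := hτmem _ hρ1 hρ2
        refine ⟨(a + τ m) % (n - 1), (τ (ρ (τ m)) + d) % (n - 1), hlt _, hlt _, ?_⟩
        rw [← hred, ← hred, pow_add, pow_add]
        calc σ ^ a * τ * σ ^ b * (σ ^ c * τ * σ ^ d)
            = σ ^ a * (τ * (σ ^ b * σ ^ c) * τ) * σ ^ d := by group
          _ = σ ^ a * (τ * σ ^ m * τ) * σ ^ d := by rw [hm]
          _ = σ ^ a * (σ ^ (τ m) * τ * σ ^ (τ (ρ (τ m)))) * σ ^ d := by
              rw [hrel m hm1 hm2]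
          _ = σ ^ a * σ ^ (τ m) * τ * (σ ^ (τ (ρ (τ m))) * σ ^ d) := by group
  · rintro x _ (⟨a, ha, rfl⟩ | ⟨a, b, ha, hb, rfl⟩)
    · left
      refine ⟨(n - 1 - a) % (n - 1), hlt _, ?_⟩
      rw [← hred, hsinv a ha]
    · right
      refine ⟨(n - 1 - b) % (n - 1), (n - 1 - a) % (n - 1), hlt _, hlt _, ?_⟩
      rw [← hred, ← hred, mul_inv_rev, mul_inv_rev, hτinv, hsinv a ha, hsinv b hb,
        mul_assoc]
end
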